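/- arXiv:math/0202083 — 7 statements merged into one kernel-verified Lean document; each statement's English description precedes it below -/
import Mathlib

section
/- Let n ≥ 1, t₀ ∈ ℝ, and let A : [t₀, ∞) → M_n(ℂ) be a continuous matrix-valued function such that (i) for every t ≥ t₀ the improper Riemann integral Ã(t) := lim_{T→∞} ∫_t^T A(s) ds exists (entrywise), and (ii) the function t ↦ A(t)·Ã(t) is integrable on [t₀, ∞) (entrywise, with respect to Lebesgue measure). If x : [t₀, ∞) → ℂⁿ is differentiable and satisfies x′(t) = A(t) x(t) for all t ≥ t₀, then the limit lim_{t→∞} x(t) exists in ℂⁿ. -/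
/-!
Put `B(t) = ∫_t^∞ A`, so that `B' = -A` and `B(t) → 0`; in particular `1 - B(t)` is invertible
for large `t`. The substitution `x = (1 - B) w` turns `x' = A x` into
`w' = -(1 - B)⁻¹ A B w`, an equation whose coefficient is integrable at infinity. Once the tail
integral of `‖A B‖` is small, comparing `‖w‖` with its maximum on `[b, T]` shows that `w` stays
bounded, so `w'` is integrable and `w` converges; hence so does `x = w - B w`.
-/

open MeasureTheory Filter Set Matrix

section ImproperIntegral

variable {E : Type*} [NormedAddCommGroup E] [NormedSpace ℝ E] {f F : ℝ → E} {a : ℝ}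

theorem eq_sub_intervalIntegral_of_tendsto (hf : ContinuousOn f (Ici a))
    (hF : ∀ t ∈ Ici a, Tendsto (fun T => ∫ s in t..T, f s) atTop (nhds (F t)))
    {t : ℝ} (ht : t ∈ Ici a) : F t = F a - ∫ s in a..t, f s := by
  have hint : ∀ T ∈ Ici a, IntervalIntegrable f volume a T := fun T hT =>
    (hf.mono fun s hs => (le_min le_rfl hT).trans hs.1).intervalIntegrable
  refine tendsto_nhds_unique (hF t ht) (((hF a self_mem_Ici).sub_const _).congr' ?_)
  filter_upwards [eventually_ge_atTop t] with T hT
  exact intervalIntegral.integral_interval_sub_left (hint T (le_trans ht hT)) (hint t ht)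

theorem hasDerivAt_of_tendsto_intervalIntegral [CompleteSpace E] (hf : ContinuousOn f (Ici a))
    (hF : ∀ t ∈ Ici a, Tendsto (fun T => ∫ s in t..T, f s) atTop (nhds (F t)))
    {t : ℝ} (ht : t ∈ Ioi a) : HasDerivAt F (-f t) t := by
  have hnhds : Ici a ∈ nhds t := Ici_mem_nhds ht
  have hprim : HasDerivAt (fun u => ∫ s in a..u, f s) (f t) t :=
    intervalIntegral.integral_hasDerivAt_right
      ((hf.mono fun s hs => (le_min le_rfl (le_of_lt ht)).trans hs.1).intervalIntegrable)
      ((hf.mono Ioi_subset_Ici_self).stronglyMeasurableAtFilter isOpen_Ioi t ht)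
      (hf.continuousAt hnhds)
  refine (hprim.const_sub (F a)).congr_of_eventuallyEq ?_
  filter_upwards [hnhds] with u hu
  exact eq_sub_intervalIntegral_of_tendsto hf hF hu

theorem tendsto_zero_of_tendsto_intervalIntegral (hf : ContinuousOn f (Ici a))
    (hF : ∀ t ∈ Ici a, Tendsto (fun T => ∫ s in t..T, f s) atTop (nhds (F t))) :
    Tendsto F atTop (nhds 0) := by
  have hlim := (hF a self_mem_Ici).const_sub (F a)
  rw [sub_self] at hlim
  refine hlim.congr' ?_
  filter_upwards [eventually_ge_atTop a] with t ht
  exact (eq_sub_intervalIntegral_of_tendsto hf hF ht).symm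

end ImproperIntegral

section NormDerivBound

variable {E : Type*} [NormedAddCommGroup E] [NormedSpace ℝ E] [CompleteSpace E]
  {f f' : ℝ → E} {g : ℝ → ℝ} {a : ℝ}

theorem aestronglyMeasurable_of_hasDerivAt {s : Set ℝ} (hs : MeasurableSet s)
    (hf : ∀ t ∈ s, HasDerivAt f (f' t) t) : AEStronglyMeasurable f' (volume.restrict s) :=
  (aestronglyMeasurable_deriv f _).congr <|
    (ae_restrict_iff' hs).2 (ae_of_all _ fun t ht => (hf t ht).deriv)

theorem integrableOn_of_hasDerivAt_of_norm_le {s : Set ℝ} (hs : MeasurableSet s)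
    (hf : ∀ t ∈ s, HasDerivAt f (f' t) t) (hg : IntegrableOn g s)
    (hle : ∀ t ∈ s, ‖f' t‖ ≤ g t) : IntegrableOn f' s :=
  hg.mono' (aestronglyMeasurable_of_hasDerivAt hs hf) <|
    (ae_restrict_iff' hs).2 (ae_of_all _ hle)

theorem norm_le_two_mul_of_norm_deriv_le_mul_norm (hf : ∀ t ∈ Ici a, HasDerivAt f (f' t) t)
    (hg : IntegrableOn g (Ioi a)) (hg₀ : ∀ t ∈ Ici a, 0 ≤ g t)
    (hsmall : ∫ t in Ioi a, g t ≤ 1 / 2) (hbound : ∀ t ∈ Ici a, ‖f' t‖ ≤ g t * ‖f t‖) :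
    ∀ T ∈ Ici a, ‖f T‖ ≤ 2 * ‖f a‖ := by
  intro T hT
  have hfc : ContinuousOn (fun t => ‖f t‖) (Icc a T) := fun t ht =>
    (hf t ht.1).continuousAt.norm.continuousWithinAt
  obtain ⟨τ, ⟨haτ, hτT⟩, hτ⟩ := isCompact_Icc.exists_isMaxOn ⟨a, le_rfl, hT⟩ hfc
  have hIoc : Ioc a τ ⊆ Ici a := fun t ht => ht.1.le
  have hderiv_le : ∀ t ∈ Ioc a τ, ‖f' t‖ ≤ ‖f τ‖ * g t := fun t ht =>
    (hbound t (hIoc ht)).trans <| by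
      rw [mul_comm]
      exact mul_le_mul_of_nonneg_right (hτ ⟨ht.1.le, ht.2.trans hτT⟩) (hg₀ t (hIoc ht))
  have hf'int : IntervalIntegrable f' volume a τ :=
    (intervalIntegrable_iff_integrableOn_Ioc_of_le haτ).2 <|
      integrableOn_of_hasDerivAt_of_norm_le measurableSet_Ioc (fun t ht => hf t (hIoc ht))
        ((hg.mono_set Ioc_subset_Ioi_self).const_mul _) hderiv_le
  have hincr : ‖f τ - f a‖ ≤ ‖f τ‖ / 2 := calc
    ‖f τ - f a‖ = ‖∫ t in a..τ, f' t‖ := by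
      rw [intervalIntegral.integral_eq_sub_of_hasDerivAt (fun t ht => hf t ?_) hf'int]
      exact (le_min le_rfl haτ).trans ht.1
    _ ≤ ∫ t in a..τ, ‖f τ‖ * g t := by
      refine intervalIntegral.norm_integral_le_of_norm_le haτ (ae_of_all _ hderiv_le) ?_
      exact (intervalIntegrable_iff_integrableOn_Ioc_of_le haτ).2
        ((hg.mono_set Ioc_subset_Ioi_self).const_mul _)
    _ = ‖f τ‖ * ∫ t in Ioc a τ, g t := by
      rw [intervalIntegral.integral_const_mul, intervalIntegral.integral_of_le haτ]
    _ ≤ ‖f τ‖ * (1 / 2) := by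
      refine mul_le_mul_of_nonneg_left ((setIntegral_mono_set hg ?_ ?_).trans hsmall)
        (norm_nonneg _)
      · exact (ae_restrict_iff' measurableSet_Ioi).2 <|
          ae_of_all _ fun t ht => hg₀ t (Ioi_subset_Ici_self ht)
      · exact Ioc_subset_Ioi_self.eventuallyLE
    _ = ‖f τ‖ / 2 := by ring
  have hTτ : ‖f T‖ ≤ ‖f τ‖ := hτ ⟨hT, le_rfl⟩
  linarith [norm_le_insert' (f τ) (f a)]

theorem exists_tendsto_of_norm_deriv_le_mul_norm (hf : ∀ t ∈ Ici a, HasDerivAt f (f' t) t)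
    (hg : IntegrableOn g (Ioi a)) (hg₀ : ∀ t ∈ Ici a, 0 ≤ g t)
    (hbound : ∀ t ∈ Ici a, ‖f' t‖ ≤ g t * ‖f t‖) : ∃ L, Tendsto f atTop (nhds L) := by
  obtain ⟨b, hb, hab⟩ : ∃ b, ∫ t in Ioi b, g t ≤ 1 / 2 ∧ a ≤ b :=
    (((tendsto_integral_Ioi_zero tendsto_id).eventually
      (ge_mem_nhds (by norm_num : (0 : ℝ) < 1 / 2))).and (eventually_ge_atTop a)).exists
  have hIci : Ici b ⊆ Ici a := Ici_subset_Ici.2 hab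
  have hgb : IntegrableOn g (Ioi b) := hg.mono_set (Ioi_subset_Ioi hab)
  have hbdd := norm_le_two_mul_of_norm_deriv_le_mul_norm (fun t ht => hf t (hIci ht)) hgb
    (fun t ht => hg₀ t (hIci ht)) hb (fun t ht => hbound t (hIci ht))
  have hIoi : ∀ t ∈ Ioi b, t ∈ Ici a := fun t ht => hIci (Ioi_subset_Ici_self ht)
  have hf'int : IntegrableOn f' (Ioi b) :=
    integrableOn_of_hasDerivAt_of_norm_le measurableSet_Ioi (fun t ht => hf t (hIoi t ht))
      (hgb.const_mul (2 * ‖f b‖)) fun t ht => calc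
        ‖f' t‖ ≤ g t * ‖f t‖ := hbound t (hIoi t ht)
        _ ≤ g t * (2 * ‖f b‖) :=
          mul_le_mul_of_nonneg_left (hbdd t (Ioi_subset_Ici_self ht)) (hg₀ t (hIoi t ht))
        _ = 2 * ‖f b‖ * g t := mul_comm _ _
  exact ⟨_, tendsto_limUnder_of_hasDerivAt_of_integrableOn_Ioi (fun t ht => hf t (hIoi t ht))
    hf'int⟩

end NormDerivBound

theorem HasDerivAt.ringInverse {R : Type*} [NormedRing R] [HasSummableGeomSeries R]
    [NormedAlgebra ℝ R] {f : ℝ → R} {f' : R} {t : ℝ} (hf : HasDerivAt f f' t)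
    (ht : IsUnit (f t)) :
    HasDerivAt (fun s => Ring.inverse (f s))
      (-(Ring.inverse (f t) * f' * Ring.inverse (f t))) t := by
  obtain ⟨u, hu⟩ := ht
  rw [← hu, Ring.inverse_unit]
  exact (hu ▸ hasFDerivAt_ringInverse (𝕜 := ℝ) u).comp_hasDerivAt t hf

section LinearODE

variable {E : Type*} [NormedAddCommGroup E] [NormedSpace ℝ E] [CompleteSpace E]

theorem hasDerivAt_ringInverse_one_sub_apply {A B : ℝ → E →L[ℝ] E} {x : ℝ → E} {t : ℝ}
    (hB : HasDerivAt B (-A t) t) (hx : HasDerivAt x (A t (x t)) t) (hu : IsUnit (1 - B t)) :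
    HasDerivAt (fun s => Ring.inverse (1 - B s) (x s))
      (-(Ring.inverse (1 - B t) * (A t * B t)) (Ring.inverse (1 - B t) (x t))) t := by
  set R := Ring.inverse (1 - B t)
  have hR := (hB.const_sub 1).ringInverse hu
  have hRB : (1 - B t) * R = 1 := Ring.mul_inverse_cancel _ hu
  -- `(1 - B) R = 1` means `R - 1 = B R`, which turns `R A - R A R` into `-R A B R`.
  have key : -(R * (A t * B t) * R) = -(R * - -A t * R) + R * A t := calc
    _ = -(R * A t * R) + R * A t * ((1 - B t) * R) := by noncomm_ring
    _ = _ := by rw [hRB, mul_one]; noncomm_ring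
  convert hR.clm_apply hx using 1
  simpa using congrArg (fun T => T (x t)) key

theorem exists_tendsto_of_hasDerivAt_clm_apply_of_integrableOn_mul {A B : ℝ → E →L[ℝ] E}
    {x : ℝ → E} {a : ℝ}
    (hB : ∀ t ∈ Ioi a, HasDerivAt B (-A t) t) (hB₀ : Tendsto B atTop (nhds 0))
    (hAB : IntegrableOn (fun t => A t * B t) (Ioi a))
    (hx : ∀ t ∈ Ioi a, HasDerivAt x (A t (x t)) t) : ∃ L, Tendsto x atTop (nhds L) := by
  have h1B : Tendsto (fun t => 1 - B t) atTop (nhds 1) := by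
    simpa using tendsto_const_nhds.sub hB₀
  have hR : Tendsto (fun t => Ring.inverse (1 - B t)) atTop (nhds 1) := by
    simpa [Function.comp_def] using
      (NormedRing.inverse_continuousAt (1 : (E →L[ℝ] E)ˣ)).tendsto.comp h1B
  obtain ⟨b, hb⟩ := eventually_atTop.1 <|
    (h1B.eventually (Units.isOpen.mem_nhds isUnit_one)).and <|
      (hR.norm.eventually (gt_mem_nhds (lt_add_one ‖(1 : E →L[ℝ] E)‖))).and
        (eventually_gt_atTop a)
  have hIoi : ∀ t ∈ Ici b, t ∈ Ioi a := fun t ht => (hb t ht).2.2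
  set C := ‖(1 : E →L[ℝ] E)‖ + 1
  have hbound : ∀ t ∈ Ici b,
      ‖-(Ring.inverse (1 - B t) * (A t * B t)) (Ring.inverse (1 - B t) (x t))‖ ≤
        C * ‖A t * B t‖ * ‖Ring.inverse (1 - B t) (x t)‖ := fun t ht => calc
    _ ≤ ‖Ring.inverse (1 - B t) * (A t * B t)‖ * ‖Ring.inverse (1 - B t) (x t)‖ := by
      simpa using (Ring.inverse (1 - B t) * (A t * B t)).le_opNorm _
    _ ≤ C * ‖A t * B t‖ * ‖Ring.inverse (1 - B t) (x t)‖ := by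
      gcongr
      exact (norm_mul_le _ _).trans (by gcongr; exact (hb t ht).2.1.le)
  obtain ⟨L, hL⟩ := exists_tendsto_of_norm_deriv_le_mul_norm
    (fun t ht => hasDerivAt_ringInverse_one_sub_apply (hB t (hIoi t ht)) (hx t (hIoi t ht))
      (hb t ht).1)
    ((hAB.mono_set (Ioi_subset_Ioi (hIoi b self_mem_Ici).le)).norm.const_mul C)
    (fun t _ => by positivity) hbound
  have hlim := (isBoundedBilinearMap_apply.continuous.tendsto (1, L)).comp (h1B.prodMk_nhds hL)
  refine ⟨L, Tendsto.congr' ?_ (by simpa using hlim)⟩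
  filter_upwards [eventually_ge_atTop b] with t ht
  simpa using congrArg (fun T => T (x t)) (Ring.mul_inverse_cancel _ (hb t ht).1)

end LinearODE

section MulVec

variable {ι 𝕜 : Type*} [Fintype ι] [RCLike 𝕜]

-- The domain is `ι → ι → 𝕜` rather than `Matrix ι ι 𝕜`, which carries no norm instance.
variable (ι 𝕜) in
noncomputable def mulVecCLM : (ι → ι → 𝕜) →L[ℝ] (ι → 𝕜) →L[ℝ] (ι → 𝕜) :=
  LinearMap.toContinuousLinearMap
    { toFun := fun M => LinearMap.toContinuousLinearMap ((mulVecLin M).restrictScalars ℝ)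
      map_add' := fun M N => by ext v : 1; exact add_mulVec (α := 𝕜) M N v
      map_smul' := fun c M => by ext v : 1; exact smul_mulVec (α := 𝕜) c M v }

theorem mulVecCLM_apply (M : Matrix ι ι 𝕜) (v : ι → 𝕜) : mulVecCLM ι 𝕜 M v = M *ᵥ v := rfl

theorem mulVecCLM_mul (M N : Matrix ι ι 𝕜) :
    mulVecCLM ι 𝕜 (M * N) = mulVecCLM ι 𝕜 M * mulVecCLM ι 𝕜 N := by
  ext v i
  simp [mulVecCLM_apply, mulVec_mulVec]

end MulVec

theorem dunkl_stmt0_general (n : ℕ) (t₀ : ℝ)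
    (A B : ℝ → Matrix (Fin n) (Fin n) ℂ)
    (hAc : ∀ i j, ContinuousOn (fun t => A t i j) (Ici t₀))
    (hB : ∀ t ∈ Ici t₀, ∀ i j,
      Tendsto (fun T => ∫ s in t..T, A s i j) atTop (nhds (B t i j)))
    (hAB : ∀ i j, IntegrableOn (fun t => (A t * B t) i j) (Ici t₀))
    (x : ℝ → Fin n → ℂ)
    (hx : ∀ t ∈ Ici t₀, HasDerivWithinAt x (A t *ᵥ x t) (Ici t₀) t) :
    ∃ L : Fin n → ℂ, Tendsto x atTop (nhds L) := by
  have hBd : ∀ t ∈ Ioi t₀, HasDerivAt (F := Fin n → Fin n → ℂ) B (-A t) t :=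
    fun t ht => hasDerivAt_pi.2 fun i => hasDerivAt_pi.2 fun j =>
      hasDerivAt_of_tendsto_intervalIntegral (hAc i j) (fun s hs => hB s hs i j) ht
  have hB₀ : Tendsto (β := Fin n → Fin n → ℂ) B atTop (nhds 0) :=
    tendsto_pi_nhds.2 fun i => tendsto_pi_nhds.2 fun j =>
      tendsto_zero_of_tendsto_intervalIntegral (hAc i j) fun s hs => hB s hs i j
  have hABi : IntegrableOn (ε := Fin n → Fin n → ℂ) (fun t => A t * B t) (Ioi t₀) :=
    IntegrableOn.mono_set (Integrable.of_eval fun i => Integrable.of_eval fun j => hAB i j)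
      Ioi_subset_Ici_self
  refine exists_tendsto_of_hasDerivAt_clm_apply_of_integrableOn_mul
    (A := fun t => mulVecCLM (Fin n) ℂ (A t)) (B := fun t => mulVecCLM (Fin n) ℂ (B t))
    (fun t ht => ((mulVecCLM (Fin n) ℂ).hasFDerivAt.comp_hasDerivAt t (hBd t ht)).congr_deriv
      (map_neg _ _))
    (map_zero (mulVecCLM (Fin n) ℂ) ▸ ((mulVecCLM (Fin n) ℂ).continuous.tendsto 0).comp hB₀) ?_
    (fun t ht => (hx t (Ioi_subset_Ici_self ht)).hasDerivAt (Ici_mem_nhds ht))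
  simpa only [IntegrableOn, mulVecCLM_mul] using
    (mulVecCLM (Fin n) ℂ).integrable_comp (μ := volume.restrict (Ioi t₀)) hABi

/-- Levinson/Wintner-type asymptotic integration: if the improper integral
`Ã(t) = ∫_t^∞ A(s) ds` exists entrywise and `A·Ã` is integrable on `[t₀,∞)`,
then every solution of `x' = A(t)x` has a limit at infinity. -/
theorem dunkl_stmt0 (n : ℕ) (hn : 1 ≤ n) (t₀ : ℝ)
    (A B : ℝ → Matrix (Fin n) (Fin n) ℂ)
    (hAc : ∀ i j, ContinuousOn (fun t => A t i j) (Ici t₀))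
    (hB : ∀ t ∈ Ici t₀, ∀ i j,
      Tendsto (fun T => ∫ s in t..T, A s i j) atTop (nhds (B t i j)))
    (hAB : ∀ i j, IntegrableOn (fun t => (A t * B t) i j) (Ici t₀))
    (x : ℝ → Fin n → ℂ)
    (hx : ∀ t ∈ Ici t₀, HasDerivWithinAt x (A t *ᵥ x t) (Ici t₀) t) :
    ∃ L : Fin n → ℂ, Tendsto x atTop (nhds L) :=
  dunkl_stmt0_general n t₀ A B hAc hB hAB x hx
end

section
/- Let t₀ ∈ ℝ and let φ : [t₀, ∞) → ℝ be a C¹ function with φ(t) > 0 and φ′(t) ≥ 0 for all t ≥ t₀, and lim_{t→∞} φ(t) = ∞, and let c ∈ ℝ with c ≠ 0. Then for every t ≥ t₀ the improper integral I(t) := lim_{T→∞} ∫_t^T (φ′(s)/φ(s)) e^{−i c φ(s)} ds exists in ℂ, and |I(t)| ≤ 4/(|c| φ(t)). -/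
open MeasureTheory Filter Set

/-!
Substituting `u = φ s` turns `∫_t^T (φ'/φ) e^{-icφ}` into `∫_a^{φ T} u⁻¹ e^{-icu} du` with
`a = φ t`. Integrating by parts,
`-ic ∫_a^x u⁻¹ e^{-icu} du = e^{-icx}/x - e^{-ica}/a + ∫_a^x e^{-icu}/u² du`;
as `x → ∞` the first term vanishes and the last integral converges absolutely, with modulus at
most `1/a`. Hence the limit exists and has modulus at most `2/(|c| a) ≤ 4/(|c| φ t)`.
-/

noncomputable def expNegIMul (c u : ℝ) : ℂ := Complex.exp (-(Complex.I * c * u))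

section expNegIMul

variable (c : ℝ)

lemma norm_expNegIMul (u : ℝ) : ‖expNegIMul c u‖ = 1 := by
  simp [expNegIMul, Complex.norm_exp]

lemma continuous_expNegIMul : Continuous (expNegIMul c) := by
  unfold expNegIMul; fun_prop

lemma hasDerivAt_expNegIMul (u : ℝ) :
    HasDerivAt (expNegIMul c) (-(Complex.I * c) * expNegIMul c u) u := by
  have h : HasDerivAt (fun y : ℝ => -(Complex.I * c * y)) (-(Complex.I * c)) u := by
    have h0 : HasDerivAt (fun y : ℝ => (y : ℂ)) 1 u := (hasDerivAt_id (u : ℂ)).comp_ofReal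
    exact ((h0.const_mul (Complex.I * c)).neg).congr_deriv (by rw [mul_one])
  rw [mul_comm]
  exact h.cexp

lemma norm_expNegIMul_div {u : ℝ} (hu : 0 < u) : ‖expNegIMul c u / u‖ = u⁻¹ := by
  rw [norm_div, norm_expNegIMul, Complex.norm_real, Real.norm_of_nonneg hu.le, one_div]

lemma norm_expNegIMul_div_sq {u : ℝ} (hu : 0 < u) :
    ‖expNegIMul c u / (u : ℂ) ^ 2‖ = u ^ (-2 : ℝ) := by
  rw [norm_div, norm_expNegIMul, norm_pow, Complex.norm_real, Real.norm_of_nonneg hu.le,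
    Real.rpow_neg hu.le, one_div]
  norm_cast

lemma integrableOn_expNegIMul_div_sq {a : ℝ} (ha : 0 < a) :
    IntegrableOn (fun u : ℝ => expNegIMul c u / (u : ℂ) ^ 2) (Ioi a) := by
  refine Integrable.mono' (integrableOn_Ioi_rpow_of_lt (by norm_num : (-2 : ℝ) < -1) ha) ?_ ?_
  · refine ContinuousOn.aestronglyMeasurable (fun u hu => ?_) measurableSet_Ioi
    have : (u : ℂ) ^ 2 ≠ 0 := by exact_mod_cast (pow_pos (ha.trans hu) 2).ne'
    exact ((continuous_expNegIMul c).continuousWithinAt).div (by fun_prop) this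
  · filter_upwards [ae_restrict_mem measurableSet_Ioi] with u hu
    exact (norm_expNegIMul_div_sq c (ha.trans hu)).le

lemma norm_integral_expNegIMul_div_sq_le {a : ℝ} (ha : 0 < a) :
    ‖∫ u in Ioi a, expNegIMul c u / (u : ℂ) ^ 2‖ ≤ a⁻¹ := by
  have h : ∫ u in Ioi a, u ^ (-2 : ℝ) = a⁻¹ := by
    rw [integral_Ioi_rpow_of_lt (by norm_num) ha]
    norm_num [Real.rpow_neg_one]
  rw [← h]
  refine norm_integral_le_of_norm_le (integrableOn_Ioi_rpow_of_lt (by norm_num) ha) ?_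
  filter_upwards [ae_restrict_mem measurableSet_Ioi] with u hu
  exact (norm_expNegIMul_div_sq c (ha.trans hu)).le

lemma mul_integral_inv_mul_expNegIMul {a b : ℝ} (ha : 0 < a) (hb : 0 < b) :
    -(Complex.I * c) * ∫ u in a..b, (u : ℂ)⁻¹ * expNegIMul c u =
      expNegIMul c b / b - expNegIMul c a / a + ∫ u in a..b, expNegIMul c u / (u : ℂ) ^ 2 := by
  have hne : ∀ u ∈ uIcc a b, (u : ℂ) ≠ 0 := fun u hu => by
    have : 0 < u := lt_of_lt_of_le (lt_min ha hb) hu.1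
    exact_mod_cast this.ne'
  have hinv : ∀ u ∈ uIcc a b, HasDerivAt (fun x : ℝ => (x : ℂ)⁻¹) (-((u : ℂ) ^ 2)⁻¹) u :=
    fun u hu => (hasDerivAt_inv (hne u hu)).comp_ofReal
  have hparts := intervalIntegral.integral_mul_deriv_eq_deriv_mul hinv
    (fun u _ => hasDerivAt_expNegIMul c u)
    (ContinuousOn.intervalIntegrable fun u hu =>
      ((Complex.continuous_ofReal.continuousWithinAt.pow 2).inv₀ (pow_ne_zero 2 (hne u hu))).neg)
    ((continuous_const.mul (continuous_expNegIMul c)).intervalIntegrable a b)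
  have hlhs : ∫ u in a..b, (u : ℂ)⁻¹ * (-(Complex.I * c) * expNegIMul c u) =
      -(Complex.I * c) * ∫ u in a..b, (u : ℂ)⁻¹ * expNegIMul c u := by
    rw [← intervalIntegral.integral_const_mul]
    congr 1; ext u; ring
  have hrhs : ∫ u in a..b, -((u : ℂ) ^ 2)⁻¹ * expNegIMul c u =
      -∫ u in a..b, expNegIMul c u / (u : ℂ) ^ 2 := by
    rw [← intervalIntegral.integral_neg]
    congr 1; ext u; ring
  rw [← hlhs, hparts, hrhs]
  ring

lemma exists_tendsto_integral_inv_mul_expNegIMul {a : ℝ} (hc : c ≠ 0) (ha : 0 < a) :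
    ∃ I : ℂ, Tendsto (fun x : ℝ => ∫ u in a..x, (u : ℂ)⁻¹ * expNegIMul c u) atTop (nhds I) ∧
      ‖I‖ ≤ 2 / (|c| * a) := by
  set k : ℂ := -(Complex.I * c)
  have hk : k ≠ 0 := by simp [k, hc]
  have hnorm_k : ‖k‖ = |c| := by simp [k]
  set J := ∫ u in Ioi a, expNegIMul c u / (u : ℂ) ^ 2
  have hboundary : Tendsto (fun x : ℝ => expNegIMul c x / x) atTop (nhds 0) := by
    refine squeeze_zero_norm' ?_ tendsto_inv_atTop_zero
    filter_upwards [eventually_gt_atTop 0] with x hx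
    exact (norm_expNegIMul_div c hx).le
  have htail : Tendsto (fun x : ℝ => ∫ u in a..x, expNegIMul c u / (u : ℂ) ^ 2) atTop (nhds J) :=
    intervalIntegral_tendsto_integral_Ioi a (integrableOn_expNegIMul_div_sq c ha) tendsto_id
  refine ⟨k⁻¹ * (0 - expNegIMul c a / a + J), ?_, ?_⟩
  · refine (((hboundary.sub_const _).add htail).const_mul k⁻¹).congr' ?_
    filter_upwards [eventually_gt_atTop 0] with x hx
    rw [← mul_integral_inv_mul_expNegIMul c ha hx, inv_mul_cancel_left₀ hk]
  · calc ‖k⁻¹ * (0 - expNegIMul c a / a + J)‖ ≤ |c|⁻¹ * (a⁻¹ + a⁻¹) := by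
          rw [norm_mul, norm_inv, hnorm_k, zero_sub]
          gcongr
          refine (norm_add_le _ _).trans (add_le_add ?_ (norm_integral_expNegIMul_div_sq_le c ha))
          rw [norm_neg, norm_expNegIMul_div c ha]
      _ = 2 / (|c| * a) := by field_simp; ring

end expNegIMul

theorem integral_deriv_smul_comp_of_hasDerivWithinAt_Ici {E : Type*} [NormedAddCommGroup E]
    [NormedSpace ℝ E] {t₀ : ℝ} {φ φ' : ℝ → ℝ} {g : ℝ → E}
    (hderiv : ∀ t ∈ Ici t₀, HasDerivWithinAt φ (φ' t) (Ici t₀) t)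
    (hcont : ContinuousOn φ' (Ici t₀)) (hg : ContinuousOn g (φ '' Ici t₀))
    {a b : ℝ} (ha : t₀ ≤ a) (hb : t₀ ≤ b) :
    ∫ s in a..b, φ' s • g (φ s) = ∫ u in φ a..φ b, g u := by
  have hsub : uIcc a b ⊆ Ici t₀ := fun s hs => (le_min ha hb).trans hs.1
  refine intervalIntegral.integral_deriv_smul_comp''
    (fun s hs => (hderiv s (hsub hs)).continuousWithinAt.mono hsub) (fun s hs => ?_)
    (hcont.mono hsub) (hg.mono (image_mono hsub))
  have hs : t₀ < s := (le_min ha hb).trans_lt hs.1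
  exact (hderiv s hs.le).mono (Ioi_subset_Ici hs.le)

theorem dunkl_stmt5_general (t₀ : ℝ) (φ φ' : ℝ → ℝ)
    (hderiv : ∀ t ∈ Ici t₀, HasDerivWithinAt φ (φ' t) (Ici t₀) t)
    (hcont : ContinuousOn φ' (Ici t₀))
    (hpos : ∀ t ∈ Ici t₀, 0 < φ t)
    (htop : Tendsto φ atTop atTop)
    (c : ℝ) (hc : c ≠ 0) :
    ∀ t ∈ Ici t₀, ∃ I : ℂ,
      Tendsto (fun T : ℝ =>
          ∫ s in t..T, ((φ' s / φ s : ℝ) : ℂ) *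
            Complex.exp (-(Complex.I * (c : ℂ) * ((φ s : ℝ) : ℂ))))
        atTop (nhds I) ∧
      ‖I‖ ≤ 4 / (|c| * φ t) := by
  intro t ht
  have hφt : 0 < φ t := hpos t ht
  obtain ⟨I, hI, hIle⟩ := exists_tendsto_integral_inv_mul_expNegIMul c hc hφt
  have hg : ContinuousOn (fun u : ℝ => (u : ℂ)⁻¹ * expNegIMul c u) (φ '' Ici t₀) := by
    rintro _ ⟨s, hs, rfl⟩
    have : (φ s : ℂ) ≠ 0 := by exact_mod_cast (hpos s hs).ne'
    exact (Complex.continuous_ofReal.continuousWithinAt.inv₀ this).mul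
      (continuous_expNegIMul c).continuousWithinAt
  refine ⟨I, (hI.comp htop).congr' ?_, hIle.trans ?_⟩
  · filter_upwards [eventually_ge_atTop t] with T hT
    rw [Function.comp_apply, ← integral_deriv_smul_comp_of_hasDerivWithinAt_Ici hderiv hcont hg
      ht (le_trans ht hT)]
    refine intervalIntegral.integral_congr fun s _ => ?_
    simp only [expNegIMul, Complex.real_smul]
    push_cast
    ring
  · gcongr
    norm_num

/-- For a `C¹` function `φ` on `[t₀,∞)` which is positive, nondecreasing and tends to
infinity, and `c ≠ 0`, the improper integral `∫_t^∞ (φ'/φ) e^{-icφ} ds` exists and is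
bounded by `4 / (|c| φ(t))`. -/
theorem dunkl_stmt5 (t₀ : ℝ) (φ φ' : ℝ → ℝ)
    (hderiv : ∀ t ∈ Ici t₀, HasDerivWithinAt φ (φ' t) (Ici t₀) t)
    (hcont : ContinuousOn φ' (Ici t₀))
    (hpos : ∀ t ∈ Ici t₀, 0 < φ t)
    (hmono : ∀ t ∈ Ici t₀, 0 ≤ φ' t)
    (htop : Tendsto φ atTop atTop)
    (c : ℝ) (hc : c ≠ 0) :
    ∀ t ∈ Ici t₀, ∃ I : ℂ,
      Tendsto (fun T : ℝ =>
          ∫ s in t..T, ((φ' s / φ s : ℝ) : ℂ) *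
            Complex.exp (-(Complex.I * (c : ℂ) * ((φ s : ℝ) : ℂ))))
        atTop (nhds I) ∧
      ‖I‖ ≤ 4 / (|c| * φ t) :=
  dunkl_stmt5_general t₀ φ φ' hderiv hcont hpos htop c hc
end

section
/- Let N ≥ 1, let G be a finite subgroup of the orthogonal group O(ℝᴺ), let R₊ ⊂ ℝᴺ be a finite set of nonzero vectors such that the reflection σ_α (given by σ_α z = z − 2(⟨α,z⟩/⟨α,α⟩)α) belongs to G for every α ∈ R₊, and let k : R₊ → [0,∞). Let y ∈ ℝᴺ satisfy ⟨α, g y⟩ ≠ 0 for all α ∈ R₊ and all g ∈ G. Let κ : (0,∞) → ℝᴺ be a C¹ curve such that there is δ > 0 with ⟨α, κ(t)⟩ > δ|κ(t)| for all α ∈ R₊ and all t > 0, lim_{t→∞} |κ(t)| = ∞, and ⟨α, κ′(t)⟩ > 0 for all α ∈ R₊ and t > 0. Suppose F : (0,∞) → ℂ^G is differentiable and satisfies, for all t > 0 and all g ∈ G, F_g′(t) = Σ_{α ∈ R₊} k(α) (⟨α, κ′(t)⟩/⟨α, κ(t)⟩) e^{−i⟨α, κ(t)⟩⟨α, g y⟩}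 F_{σ_α g}(t). Then lim_{t→∞} F(t) exists in ℂ^G, and if F(t₁) ≠ 0 for some t₁ > 0 then this limit is different from 0. -/
/-!
Write `p_α(t) = ⟨α, κ t⟩` and `λ_{α,g} = ⟨α, g y⟩`. The phase `e^{-i p_α λ_{α,g}}` has derivative
`-i λ_{α,g} p_α'` times itself, so the term `k_α (p_α'/p_α) e^{-i p_α λ_{α,g}} F_{σ_α g}` of the
system can be integrated by parts. This gives a corrected function `H` with `‖H - F‖ ≤ -Φ ‖F‖` and
`‖H'‖ ≤ Φ' ‖F‖`, where `Φ = -Σ_α c_α / p_α` increases to `0` because all `p_α` are comparable to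
`|κ| → ∞`. Hence `‖F t - F s‖ ≤ -2 Φ(s) · sup_{[s,t]} ‖F‖`, so `F` is Cauchy at infinity and
`‖F s‖ ≤ 2 ‖lim F‖` for large `s`. By Grönwall a solution vanishing at one time vanishes at all
earlier times, so the limit is nonzero unless `F` vanishes on all of `(0, ∞)`.
-/

open Filter Set Topology

section Analysis

variable {E : Type*} [NormedAddCommGroup E]

theorem norm_le_two_mul_of_norm_sub_le {F : ℝ → E} {e s t : ℝ} (hst : s ≤ t)
    (hF : ContinuousOn F (Icc s t)) (he : e ≤ 1 / 2)
    (hest : ∀ u ∈ Icc s t, ∀ M, (∀ τ ∈ Icc s u, ‖F τ‖ ≤ M) → ‖F u - F s‖ ≤ e * M) :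
    ‖F t‖ ≤ 2 * ‖F s‖ := by
  obtain ⟨u, hu, hmax⟩ := isCompact_Icc.exists_isMaxOn (nonempty_Icc.2 hst) hF.norm
  have hFu : ‖F u - F s‖ ≤ e * ‖F u‖ :=
    hest u hu _ fun τ hτ => hmax ⟨hτ.1, hτ.2.trans hu.2⟩
  have hu_le : ‖F u‖ ≤ 2 * ‖F s‖ := by
    nlinarith [norm_le_insert' (F u) (F s), norm_nonneg (F u)]
  exact (hmax (right_mem_Icc.2 hst)).trans hu_le

theorem exists_tendsto_of_norm_sub_le [CompleteSpace E] {F : ℝ → E} {ε : ℝ → ℝ} {a : ℝ}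
    (hF : ContinuousOn F (Ioi a)) (hε : Tendsto ε atTop (𝓝 0))
    (hest : ∀ s ∈ Ioi a, ∀ t ≥ s, ∀ M, (∀ τ ∈ Icc s t, ‖F τ‖ ≤ M) → ‖F t - F s‖ ≤ ε s * M) :
    ∃ L, Tendsto F atTop (𝓝 L) ∧ ∀ᶠ t in atTop, ‖F t‖ ≤ 2 * ‖L‖ := by
  have hnear : ∀ᶠ s in atTop, ε s ≤ 1 / 4 ∧ ∀ t ≥ s,
      ‖F t‖ ≤ 2 * ‖F s‖ ∧ ‖F t - F s‖ ≤ ε s * (2 * ‖F s‖) := by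
    filter_upwards [eventually_gt_atTop a,
      hε.eventually (eventually_le_nhds (by norm_num : (0 : ℝ) < 1 / 4))] with s hs hεs
    have hgrowth : ∀ t ≥ s, ‖F t‖ ≤ 2 * ‖F s‖ := fun t hst =>
      norm_le_two_mul_of_norm_sub_le hst (hF.mono fun τ hτ => hs.trans_le hτ.1) (by linarith)
        fun u hu => hest s hs u hu.1
    exact ⟨hεs, fun t hst => ⟨hgrowth t hst, hest s hs t hst _ fun τ hτ => hgrowth τ hτ.1⟩⟩
  obtain ⟨s₀, hs₀⟩ := eventually_atTop.1 hnear
  have hcauchy : CauchySeq F := by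
    refine Metric.cauchySeq_iff'.2 fun η hη => ?_
    have hsmall : ∀ᶠ s in atTop, |ε s| * (2 * (2 * ‖F s₀‖)) < η := by
      simpa using (hε.abs.mul_const (2 * (2 * ‖F s₀‖))).eventually (eventually_lt_nhds (by simpa))
    obtain ⟨s, hsη, hs⟩ := (hsmall.and (eventually_ge_atTop s₀)).exists
    refine ⟨s, fun t hst => ?_⟩
    calc dist (F t) (F s) ≤ ε s * (2 * ‖F s‖) := by rw [dist_eq_norm]; exact ((hs₀ s hs).2 t hst).2
      _ ≤ |ε s| * (2 * (2 * ‖F s₀‖)) := by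
        gcongr
        · exact le_abs_self _
        · exact ((hs₀ s₀ le_rfl).2 s hs).1
      _ < η := hsη
  obtain ⟨L, hL⟩ := cauchySeq_tendsto_of_complete hcauchy
  refine ⟨L, hL, ?_⟩
  filter_upwards [hnear] with s ⟨hεs, hs⟩
  have hLs : ‖L - F s‖ ≤ ε s * (2 * ‖F s‖) :=
    le_of_tendsto ((hL.sub_const (F s)).norm) (eventually_atTop.2 ⟨s, fun t hst => (hs t hst).2⟩)
  nlinarith [norm_le_insert' (F s) L, norm_sub_rev (F s) L, norm_nonneg (F s)]

variable [NormedSpace ℝ E]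

theorem norm_sub_le_of_norm_deriv_le_deriv {f f' : ℝ → E} {B B' : ℝ → ℝ} {a b : ℝ}
    (hab : a ≤ b) (hf : ∀ t ∈ Icc a b, HasDerivAt f (f' t) t)
    (hB : ∀ t ∈ Icc a b, HasDerivAt B (B' t) t) (hbound : ∀ t ∈ Icc a b, ‖f' t‖ ≤ B' t) :
    ‖f b - f a‖ ≤ B b - B a := by
  have h := image_norm_le_of_norm_deriv_right_le_deriv_boundary'
    (f := fun t => f t - f a) (B := fun t => B t - B a)
    (fun t ht => (hf t ht).continuousAt.continuousWithinAt.sub continuousWithinAt_const)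
    (fun t ht => ((hf t (Ico_subset_Icc_self ht)).sub_const (f a)).hasDerivWithinAt)
    (by simp)
    (fun t ht => (hB t ht).continuousAt.continuousWithinAt.sub continuousWithinAt_const)
    (fun t ht => ((hB t (Ico_subset_Icc_self ht)).sub_const (B a)).hasDerivWithinAt)
    (fun t ht => hbound t (Ico_subset_Icc_self ht))
  simpa using h (right_mem_Icc.2 hab)

theorem norm_sub_le_of_corrector {F H H' : ℝ → E} {Φ Φ' : ℝ → ℝ} {s t M : ℝ} (hst : s ≤ t)
    (hH : ∀ τ ∈ Icc s t, HasDerivAt H (H' τ) τ) (hΦ : ∀ τ ∈ Icc s t, HasDerivAt Φ (Φ' τ) τ)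
    (hH' : ∀ τ ∈ Icc s t, ‖H' τ‖ ≤ M * Φ' τ) (hHs : ‖H s - F s‖ ≤ -Φ s * M)
    (hHt : ‖H t - F t‖ ≤ -Φ t * M) :
    ‖F t - F s‖ ≤ -2 * Φ s * M := by
  have hHst := norm_sub_le_of_norm_deriv_le_deriv hst hH (fun τ hτ => (hΦ τ hτ).const_mul M) hH'
  calc ‖F t - F s‖ = ‖(H t - H s) - (H t - F t) + (H s - F s)‖ := by congr 1; abel
    _ ≤ ‖H t - H s‖ + ‖H t - F t‖ + ‖H s - F s‖ :=
      (norm_add_le _ _).trans (add_le_add_left (norm_sub_le _ _) _)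
    _ ≤ -2 * Φ s * M := by linarith

theorem exists_tendsto_of_corrector [CompleteSpace E] {F H H' : ℝ → E} {Φ Φ' : ℝ → ℝ} {a : ℝ}
    (hF : ContinuousOn F (Ioi a)) (hH : ∀ t ∈ Ioi a, HasDerivAt H (H' t) t)
    (hΦ : ∀ t ∈ Ioi a, HasDerivAt Φ (Φ' t) t) (hΦ' : ∀ t ∈ Ioi a, 0 ≤ Φ' t)
    (hH' : ∀ t ∈ Ioi a, ‖H' t‖ ≤ Φ' t * ‖F t‖) (hHF : ∀ t ∈ Ioi a, ‖H t - F t‖ ≤ -Φ t * ‖F t‖)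
    (hΦ0 : Tendsto Φ atTop (𝓝 0)) :
    ∃ L, Tendsto F atTop (𝓝 L) ∧ ∀ᶠ t in atTop, ‖F t‖ ≤ 2 * ‖L‖ := by
  have hmono : MonotoneOn Φ (Ioi a) := monotoneOn_of_hasDerivWithinAt_nonneg (convex_Ioi a)
    (fun t ht => (hΦ t ht).continuousAt.continuousWithinAt)
    (fun t ht => (hΦ t (interior_subset ht)).hasDerivWithinAt)
    (fun t ht => hΦ' t (interior_subset ht))
  have hΦ_nonpos : ∀ t ∈ Ioi a, Φ t ≤ 0 := fun t ht =>
    ge_of_tendsto hΦ0 (eventually_atTop.2 ⟨t, fun u hu => hmono ht (lt_of_lt_of_le ht hu) hu⟩)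
  refine exists_tendsto_of_norm_sub_le hF (ε := fun s => -2 * Φ s)
    (by simpa using hΦ0.const_mul (-2)) fun s hs t hst M hM => ?_
  have hsub : Icc s t ⊆ Ioi a := fun τ hτ => lt_of_lt_of_le hs hτ.1
  have hHFM : ∀ τ ∈ Icc s t, ‖H τ - F τ‖ ≤ -Φ τ * M := fun τ hτ =>
    (hHF τ (hsub hτ)).trans
      (mul_le_mul_of_nonneg_left (hM τ hτ) (neg_nonneg.2 (hΦ_nonpos τ (hsub hτ))))
  refine norm_sub_le_of_corrector hst (fun τ hτ => hH τ (hsub hτ)) (fun τ hτ => hΦ τ (hsub hτ))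
    (fun τ hτ => ?_) (hHFM s (left_mem_Icc.2 hst)) (hHFM t (right_mem_Icc.2 hst))
  rw [mul_comm]
  exact (hH' τ (hsub hτ)).trans (mul_le_mul_of_nonneg_left (hM τ hτ) (hΦ' τ (hsub hτ)))

/-- Time reversal of `eq_zero_of_abs_deriv_le_mul_abs_self_of_eq_zero_right`. -/
theorem eq_zero_of_norm_deriv_le_mul_norm_of_eq_zero_right {f f' : ℝ → E} {K a b : ℝ}
    (hab : a ≤ b) (hf : ∀ t ∈ Icc a b, HasDerivAt f (f' t) t)
    (hK : ∀ t ∈ Icc a b, ‖f' t‖ ≤ K * ‖f t‖) (hb : f b = 0) : f a = 0 := by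
  have hneg : ∀ t ∈ Icc (-b) (-a), -t ∈ Icc a b := fun t ht =>
    ⟨by linarith [ht.2], by linarith [ht.1]⟩
  have hderiv : ∀ t ∈ Icc (-b) (-a), HasDerivAt (fun t => f (-t)) (-f' (-t)) t := fun t ht => by
    simpa [Function.comp_def] using (hf (-t) (hneg t ht)).scomp t (hasDerivAt_neg t)
  have := eq_zero_of_abs_deriv_le_mul_abs_self_of_eq_zero_right (K := K)
    (fun t ht => (hderiv t ht).continuousAt.continuousWithinAt)
    (fun t ht => (hderiv t (Ico_subset_Icc_self ht)).hasDerivWithinAt)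
    (by simpa using hb)
    (fun t ht => by simpa using hK (-t) (hneg t (Ico_subset_Icc_self ht)))
    (-a) (right_mem_Icc.2 (neg_le_neg hab))
  simpa using this

end Analysis

theorem real_inner_le_div_mul_real_inner {V : Type*} [NormedAddCommGroup V] [InnerProductSpace ℝ V]
    {R : Finset V} {a b x : V} {δ : ℝ} (hb : b ∈ R) (hδ : 0 < δ) (ha : δ * ‖x‖ < inner ℝ a x) :
    inner ℝ b x ≤ (∑ β ∈ R, ‖β‖) / δ * inner ℝ a x :=
  calc inner ℝ b x ≤ ‖b‖ * ‖x‖ := real_inner_le_norm b x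
    _ ≤ (∑ β ∈ R, ‖β‖) * ‖x‖ := by
        gcongr
        exact Finset.single_le_sum (fun β _ => norm_nonneg β) hb
    _ = (∑ β ∈ R, ‖β‖) / δ * (δ * ‖x‖) := by field_simp
    _ ≤ (∑ β ∈ R, ‖β‖) / δ * inner ℝ a x := by gcongr

/-- The system `F_g' = Σ_{a ∈ R} k_a (p_a'/p_a) e^{-i p_a λ_{a,g}} F_{τ_a g}` on `(0, ∞)`. For the
Dunkl kernel `p_α t = ⟨α, κ t⟩`, `lam α g = ⟨α, g y⟩` and `τ α g = σ_α g`; `C` is a comparability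
constant for the phases `p_a`. -/
structure DunklSystem (A ι : Type*) where
  R : Finset A
  k : A → ℝ
  p : A → ℝ → ℝ
  p' : A → ℝ → ℝ
  lam : A → ι → ℝ
  τ : A → ι → ι
  C : ℝ
  k_nonneg : ∀ a ∈ R, 0 ≤ k a
  lam_ne_zero : ∀ a ∈ R, ∀ g, lam a g ≠ 0
  hasDerivAt_p : ∀ a ∈ R, ∀ t ∈ Ioi (0 : ℝ), HasDerivAt (p a) (p' a t) t
  continuousOn_p' : ∀ a ∈ R, ContinuousOn (p' a) (Ioi 0)
  p_pos : ∀ a ∈ R, ∀ t ∈ Ioi (0 : ℝ), 0 < p a t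
  p'_nonneg : ∀ a ∈ R, ∀ t ∈ Ioi (0 : ℝ), 0 ≤ p' a t
  p_le_mul : ∀ a ∈ R, ∀ b ∈ R, ∀ t ∈ Ioi (0 : ℝ), p b t ≤ C * p a t
  tendsto_p : ∀ a ∈ R, Tendsto (p a) atTop atTop

namespace DunklSystem

open Complex

variable {A ι : Type*} (S : DunklSystem A ι)

noncomputable section

def phase (a : A) (g : ι) (t : ℝ) : ℂ := exp (-(I * S.p a t * S.lam a g))

def field (t : ℝ) (f : ι → ℂ) : ι → ℂ := fun g =>
  ∑ a ∈ S.R, (S.k a : ℂ) * ((S.p' a t : ℂ) / (S.p a t : ℂ)) * S.phase a g t * f (S.τ a g)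

/-- Integration by parts: since `phase' = -i p' λ · phase`, the derivative of the sum cancels
the field term `k (p'/p) phase f_τ`, leaving only terms of size `p'/p²` (see `correctorDeriv`). -/
def corrector (t : ℝ) (f : ι → ℂ) : ι → ℂ := fun g =>
  f g + ∑ a ∈ S.R, (S.k a : ℂ) / (I * S.lam a g) * (S.phase a g t / S.p a t * f (S.τ a g))

def correctorDeriv (t : ℝ) (f f' : ι → ℂ) : ι → ℂ := fun g =>
  ∑ a ∈ S.R, (S.k a : ℂ) / (I * S.lam a g) *
    (S.phase a g t / S.p a t * f' (S.τ a g) -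
      S.phase a g t * (S.p' a t / S.p a t ^ 2) * f (S.τ a g))

def rate (t : ℝ) : ℝ := ∑ a ∈ S.R, S.k a * (S.p' a t / S.p a t)

variable [Fintype ι]

/-- `Σ_g |λ_{a,g}|⁻¹` serves as an upper bound for each `|λ_{a,g}|⁻¹`. -/
def weight (a : A) : ℝ := S.k a * ∑ g, |S.lam a g|⁻¹

/-- The second summand absorbs the cross terms `rate / p_a` through `rate_div_le`. -/
def coeff (a : A) : ℝ := S.weight a + (∑ b ∈ S.R, S.weight b) * S.C * S.k a

def majorant (t : ℝ) : ℝ := -∑ a ∈ S.R, S.coeff a / S.p a t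

def majorantDeriv (t : ℝ) : ℝ := ∑ a ∈ S.R, S.coeff a * (S.p' a t / S.p a t ^ 2)

end

variable {S}

theorem norm_phase (a : A) (g : ι) (t : ℝ) : ‖S.phase a g t‖ = 1 := by
  simp [phase, Complex.norm_exp]

theorem hasDerivAt_phase {a : A} (ha : a ∈ S.R) (g : ι) {t : ℝ} (ht : t ∈ Ioi 0) :
    HasDerivAt (S.phase a g) (-(I * S.p' a t * S.lam a g) * S.phase a g t) t := by
  have hp : HasDerivAt (fun s => (S.p a s : ℂ)) (S.p' a t) t :=
    (S.hasDerivAt_p a ha t ht).ofReal_comp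
  exact (((hp.const_mul I).mul_const (S.lam a g : ℂ)).neg).cexp.congr_deriv
    (by rw [phase, Pi.neg_apply]; ring)

theorem rate_nonneg {t : ℝ} (ht : t ∈ Ioi 0) : 0 ≤ S.rate t :=
  Finset.sum_nonneg fun a ha =>
    mul_nonneg (S.k_nonneg a ha) (div_nonneg (S.p'_nonneg a ha t ht) (S.p_pos a ha t ht).le)

theorem one_le_C {a : A} (ha : a ∈ S.R) : 1 ≤ S.C := by
  have h := S.p_le_mul a ha a ha 1 (mem_Ioi.2 one_pos)
  have hp := S.p_pos a ha 1 (mem_Ioi.2 one_pos)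
  nlinarith

theorem rate_div_le {a : A} (ha : a ∈ S.R) {t : ℝ} (ht : t ∈ Ioi 0) :
    S.rate t / S.p a t ≤ S.C * ∑ b ∈ S.R, S.k b * (S.p' b t / S.p b t ^ 2) := by
  rw [rate, Finset.sum_div, Finset.mul_sum]
  refine Finset.sum_le_sum fun b hb => ?_
  have hpa := S.p_pos a ha t ht
  have hpb := S.p_pos b hb t ht
  have hk := S.k_nonneg b hb
  have hp' := S.p'_nonneg b hb t ht
  rw [div_le_iff₀ hpa]
  calc S.k b * (S.p' b t / S.p b t) = S.k b * (S.p' b t / S.p b t) * 1 := (mul_one _).symm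
    _ ≤ S.k b * (S.p' b t / S.p b t) * (S.C * S.p a t / S.p b t) := by
        gcongr
        exact (one_le_div hpb).2 (S.p_le_mul a ha b hb t ht)
    _ = S.C * (S.k b * (S.p' b t / S.p b t ^ 2)) * S.p a t := by
        field_simp

theorem hasDerivAt_corrector {F : ℝ → ι → ℂ}
    (hF : ∀ t ∈ Ioi 0, HasDerivAt F (S.field t (F t)) t) {t : ℝ} (ht : t ∈ Ioi 0) :
    HasDerivAt (fun s => S.corrector s (F s)) (S.correctorDeriv t (F t) (S.field t (F t))) t := by
  refine hasDerivAt_pi.2 fun g => ?_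
  have hterm : ∀ a ∈ S.R, HasDerivAt
      (fun s => (S.k a : ℂ) / (I * S.lam a g) * (S.phase a g s / S.p a s * F s (S.τ a g)))
      ((S.k a : ℂ) / (I * S.lam a g) *
        (((-(I * S.p' a t * S.lam a g) * S.phase a g t) * S.p a t - S.phase a g t * S.p' a t) /
          (S.p a t : ℂ) ^ 2 * F t (S.τ a g) + S.phase a g t / S.p a t * S.field t (F t) (S.τ a g)))
      t := fun a ha =>
    (((hasDerivAt_phase ha g ht).div (S.hasDerivAt_p a ha t ht).ofReal_comp
      (by exact_mod_cast (S.p_pos a ha t ht).ne')).mul (hasDerivAt_pi.1 (hF t ht) _)).const_mul _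
  refine ((hasDerivAt_pi.1 (hF t ht) g).add (HasDerivAt.fun_sum hterm)).congr_deriv ?_
  rw [field, correctorDeriv, ← Finset.sum_add_distrib]
  refine Finset.sum_congr rfl fun a ha => ?_
  have hp : (S.p a t : ℂ) ≠ 0 := by exact_mod_cast (S.p_pos a ha t ht).ne'
  have hlam : (S.lam a g : ℂ) ≠ 0 := by exact_mod_cast S.lam_ne_zero a ha g
  field_simp
  ring

variable [Fintype ι]

theorem norm_field_le {t : ℝ} (ht : t ∈ Ioi 0) (f : ι → ℂ) :
    ‖S.field t f‖ ≤ S.rate t * ‖f‖ := by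
  refine (pi_norm_le_iff_of_nonneg (mul_nonneg (rate_nonneg ht) (norm_nonneg f))).2 fun g => ?_
  refine (norm_sum_le _ _).trans ?_
  rw [rate, Finset.sum_mul]
  refine Finset.sum_le_sum fun a ha => ?_
  have hk := S.k_nonneg a ha
  have hp := S.p_pos a ha t ht
  have hp' := S.p'_nonneg a ha t ht
  rw [norm_mul, norm_mul, norm_mul, norm_phase, norm_div]
  simp only [norm_real, Real.norm_eq_abs, abs_of_nonneg hk, abs_of_pos hp, abs_of_nonneg hp',
    mul_one]
  exact mul_le_mul_of_nonneg_left (norm_le_pi_norm f _) (by positivity)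

theorem weight_nonneg {a : A} (ha : a ∈ S.R) : 0 ≤ S.weight a :=
  mul_nonneg (S.k_nonneg a ha) (Finset.sum_nonneg fun _ _ => inv_nonneg.2 (abs_nonneg _))

theorem weight_le_coeff {a : A} (ha : a ∈ S.R) : S.weight a ≤ S.coeff a := by
  have hW : 0 ≤ ∑ b ∈ S.R, S.weight b := Finset.sum_nonneg fun b hb => weight_nonneg hb
  have := mul_nonneg (mul_nonneg hW (zero_le_one.trans (one_le_C ha))) (S.k_nonneg a ha)
  rw [coeff]
  linarith

theorem coeff_nonneg {a : A} (ha : a ∈ S.R) : 0 ≤ S.coeff a :=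
  (weight_nonneg ha).trans (weight_le_coeff ha)

theorem norm_div_I_mul_le_weight {a : A} (ha : a ∈ S.R) (g : ι) :
    ‖(S.k a : ℂ) / (I * S.lam a g)‖ ≤ S.weight a := by
  rw [norm_div, norm_mul, norm_I, one_mul, norm_real, norm_real, Real.norm_eq_abs, Real.norm_eq_abs,
    abs_of_nonneg (S.k_nonneg a ha), div_eq_mul_inv, weight]
  exact mul_le_mul_of_nonneg_left
    (Finset.single_le_sum (fun g _ => inv_nonneg.2 (abs_nonneg (S.lam a g))) (Finset.mem_univ g))
    (S.k_nonneg a ha)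

theorem norm_corrector_sub_le {t : ℝ} (ht : t ∈ Ioi 0) (f : ι → ℂ) :
    ‖S.corrector t f - f‖ ≤ -S.majorant t * ‖f‖ := by
  have hnonneg : 0 ≤ -S.majorant t * ‖f‖ := by
    rw [majorant, neg_neg]
    exact mul_nonneg (Finset.sum_nonneg fun a ha =>
      div_nonneg (coeff_nonneg ha) (S.p_pos a ha t ht).le) (norm_nonneg f)
  refine (pi_norm_le_iff_of_nonneg hnonneg).2 fun g => ?_
  simp only [corrector, Pi.sub_apply, add_sub_cancel_left, majorant, neg_neg, Finset.sum_mul]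
  refine (norm_sum_le _ _).trans (Finset.sum_le_sum fun a ha => ?_)
  have hp := S.p_pos a ha t ht
  calc _ ≤ S.weight a * (1 / S.p a t * ‖f‖) := by
        rw [norm_mul, norm_mul, norm_div (S.phase a g t), norm_phase, norm_real, Real.norm_eq_abs,
          abs_of_pos hp]
        gcongr
        · exact weight_nonneg ha
        · exact norm_div_I_mul_le_weight ha g
        · exact norm_le_pi_norm f _
    _ ≤ S.coeff a / S.p a t * ‖f‖ := by
        rw [← mul_assoc, mul_one_div]
        gcongr
        exact weight_le_coeff ha

theorem majorantDeriv_eq (t : ℝ) :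
    S.majorantDeriv t = ∑ a ∈ S.R, S.weight a *
      (S.C * ∑ b ∈ S.R, S.k b * (S.p' b t / S.p b t ^ 2) + S.p' a t / S.p a t ^ 2) := by
  simp only [majorantDeriv, coeff, add_mul, mul_add, Finset.sum_add_distrib, Finset.sum_mul,
    Finset.mul_sum]
  rw [add_comm, Finset.sum_comm]
  congr 1
  exact Finset.sum_congr rfl fun a _ => Finset.sum_congr rfl fun b _ => by ring

theorem majorantDeriv_nonneg {t : ℝ} (ht : t ∈ Ioi 0) : 0 ≤ S.majorantDeriv t :=
  Finset.sum_nonneg fun a ha => mul_nonneg (coeff_nonneg ha)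
    (div_nonneg (S.p'_nonneg a ha t ht) (pow_nonneg (S.p_pos a ha t ht).le 2))

theorem norm_correctorDeriv_le {t : ℝ} (ht : t ∈ Ioi 0) (f : ι → ℂ) :
    ‖S.correctorDeriv t f (S.field t f)‖ ≤ S.majorantDeriv t * ‖f‖ := by
  refine (pi_norm_le_iff_of_nonneg (mul_nonneg (majorantDeriv_nonneg ht) (norm_nonneg f))).2
    fun g => ?_
  rw [majorantDeriv_eq, Finset.sum_mul]
  refine (norm_sum_le _ _).trans (Finset.sum_le_sum fun a ha => ?_)
  have hp := S.p_pos a ha t ht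
  have hp' := S.p'_nonneg a ha t ht
  calc _ ≤ S.weight a * (S.rate t / S.p a t * ‖f‖ + S.p' a t / S.p a t ^ 2 * ‖f‖) := by
        rw [norm_mul]
        gcongr
        · exact weight_nonneg ha
        · exact norm_div_I_mul_le_weight ha g
        refine (norm_sub_le _ _).trans (add_le_add ?_ ?_)
        · rw [norm_mul, norm_div (S.phase a g t), norm_phase, norm_real, Real.norm_eq_abs,
            abs_of_pos hp, div_mul_eq_mul_div, div_mul_eq_mul_div, one_mul]
          gcongr ?_ / _
          exact (norm_le_pi_norm _ _).trans (norm_field_le ht f)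
        · rw [norm_mul, norm_mul, norm_phase, one_mul, norm_div, norm_pow, norm_real, norm_real,
            Real.norm_eq_abs, Real.norm_eq_abs, abs_of_pos hp, abs_of_nonneg hp']
          gcongr
          exact norm_le_pi_norm f _
    _ ≤ S.weight a * (S.C * ∑ b ∈ S.R, S.k b * (S.p' b t / S.p b t ^ 2) + S.p' a t / S.p a t ^ 2) *
          ‖f‖ := by
        rw [mul_assoc, ← add_mul]
        gcongr
        · exact weight_nonneg ha
        · exact rate_div_le ha ht

theorem hasDerivAt_majorant {t : ℝ} (ht : t ∈ Ioi 0) :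
    HasDerivAt S.majorant (S.majorantDeriv t) t := by
  have hterm : ∀ a ∈ S.R, HasDerivAt (fun s => S.coeff a / S.p a s)
      (-(S.coeff a * (S.p' a t / S.p a t ^ 2))) t := fun a ha =>
    (((S.hasDerivAt_p a ha t ht).inv (S.p_pos a ha t ht).ne').const_mul (S.coeff a)).congr_deriv
      (by ring)
  exact (HasDerivAt.fun_sum hterm).neg.congr_deriv (by simp [majorantDeriv])

theorem tendsto_majorant : Tendsto S.majorant atTop (𝓝 0) := by
  have h := (tendsto_finsetSum S.R fun a ha =>
    (tendsto_const_nhds (x := S.coeff a)).div_atTop (S.tendsto_p a ha)).neg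
  rw [Finset.sum_const_zero, neg_zero] at h
  exact h

theorem eq_zero_of_le_of_eq_zero {F : ℝ → ι → ℂ}
    (hF : ∀ t ∈ Ioi 0, HasDerivAt F (S.field t (F t)) t)
    {s t : ℝ} (hs : s ∈ Ioi 0) (hst : s ≤ t) (hFt : F t = 0) : F s = 0 := by
  have hsub : Icc s t ⊆ Ioi 0 := fun τ hτ => lt_of_lt_of_le hs hτ.1
  have hrate : ContinuousOn S.rate (Icc s t) :=
    continuousOn_finsetSum _ fun a ha => continuousOn_const.mul
      (((S.continuousOn_p' a ha).mono hsub).div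
        (fun τ hτ => (S.hasDerivAt_p a ha τ (hsub hτ)).continuousAt.continuousWithinAt)
        fun τ hτ => (S.p_pos a ha τ (hsub hτ)).ne')
  obtain ⟨K, hK⟩ := isCompact_Icc.exists_bound_of_continuousOn hrate
  refine eq_zero_of_norm_deriv_le_mul_norm_of_eq_zero_right (K := K) hst
    (fun τ hτ => hF τ (hsub hτ)) (fun τ hτ => (norm_field_le (hsub hτ) _).trans ?_) hFt
  exact mul_le_mul_of_nonneg_right ((Real.le_norm_self _).trans (hK τ hτ)) (norm_nonneg _)

theorem exists_tendsto_and_ne_zero {F : ℝ → ι → ℂ}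
    (hF : ∀ t ∈ Ioi 0, HasDerivAt F (S.field t (F t)) t) :
    ∃ L, Tendsto F atTop (𝓝 L) ∧ ((∃ t₁ ∈ Ioi (0 : ℝ), F t₁ ≠ 0) → L ≠ 0) := by
  obtain ⟨L, hL, hFL⟩ := exists_tendsto_of_corrector
    (fun t ht => (hF t ht).continuousAt.continuousWithinAt)
    (fun t ht => hasDerivAt_corrector hF ht) (fun t ht => hasDerivAt_majorant ht)
    (fun t ht => majorantDeriv_nonneg ht) (fun t ht => norm_correctorDeriv_le ht (F t))
    (fun t ht => norm_corrector_sub_le ht (F t)) tendsto_majorant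
  refine ⟨L, hL, ?_⟩
  rintro ⟨t₁, ht₁, hFt₁⟩ rfl
  obtain ⟨t, hFt, ht⟩ := (hFL.and (eventually_ge_atTop t₁)).exists
  exact hFt₁ (eq_zero_of_le_of_eq_zero hF ht₁ ht (by simpa using hFt))

end DunklSystem

theorem dunkl_stmt6_general (N : ℕ)
    (G : Subgroup (EuclideanSpace ℝ (Fin N) ≃ₗᵢ[ℝ] EuclideanSpace ℝ (Fin N)))
    [Finite G]
    (R : Finset (EuclideanSpace ℝ (Fin N)))
    (σ : EuclideanSpace ℝ (Fin N) → G)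
    (k : EuclideanSpace ℝ (Fin N) → ℝ) (hk : ∀ α ∈ R, 0 ≤ k α)
    (y : EuclideanSpace ℝ (Fin N))
    (hy : ∀ α ∈ R, ∀ g : G,
      (inner ℝ α ((g : EuclideanSpace ℝ (Fin N) ≃ₗᵢ[ℝ] EuclideanSpace ℝ (Fin N)) y) : ℝ) ≠ 0)
    (κ κ' : ℝ → EuclideanSpace ℝ (Fin N))
    (hκd : ∀ t ∈ Ioi (0 : ℝ), HasDerivAt κ (κ' t) t)
    (hκ'c : ContinuousOn κ' (Ioi 0))
    (δ : ℝ) (hδ : 0 < δ)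
    (hκδ : ∀ α ∈ R, ∀ t ∈ Ioi (0 : ℝ), δ * ‖κ t‖ < (inner ℝ α (κ t) : ℝ))
    (hκtop : Tendsto (fun t => ‖κ t‖) atTop atTop)
    (hκ'C : ∀ α ∈ R, ∀ t ∈ Ioi (0 : ℝ), 0 < (inner ℝ α (κ' t) : ℝ))
    (F : ℝ → G → ℂ)
    (hF : ∀ t ∈ Ioi (0 : ℝ), ∀ g : G,
      HasDerivAt (fun s => F s g)
        (∑ α ∈ R, (k α : ℂ) * (((inner ℝ α (κ' t) : ℝ) : ℂ) / ((inner ℝ α (κ t) : ℝ) : ℂ)) *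
          Complex.exp (-(Complex.I * ((inner ℝ α (κ t) : ℝ) : ℂ) *
            ((inner ℝ α ((g : EuclideanSpace ℝ (Fin N) ≃ₗᵢ[ℝ] EuclideanSpace ℝ (Fin N)) y) : ℝ) : ℂ))) *
          F t (σ α * g)) t) :
    ∃ L : G → ℂ, Tendsto F atTop (nhds L) ∧ ((∃ t₁ ∈ Ioi (0 : ℝ), F t₁ ≠ 0) → L ≠ 0) := by
  have := Fintype.ofFinite G
  let S : DunklSystem (EuclideanSpace ℝ (Fin N)) G :=
    { R, k
      p := fun α t => inner ℝ α (κ t)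
      p' := fun α t => inner ℝ α (κ' t)
      lam := fun α g => inner ℝ α ((g : EuclideanSpace ℝ (Fin N) ≃ₗᵢ[ℝ] EuclideanSpace ℝ (Fin N)) y)
      τ := fun α g => σ α * g
      C := (∑ β ∈ R, ‖β‖) / δ
      k_nonneg := hk
      lam_ne_zero := hy
      hasDerivAt_p := fun α _ t ht => (innerSL ℝ α).hasFDerivAt.comp_hasDerivAt t (hκd t ht)
      continuousOn_p' := fun α _ => continuousOn_const.inner hκ'c
      p_pos := fun α hα t ht => (mul_nonneg hδ.le (norm_nonneg _)).trans_lt (hκδ α hα t ht)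
      p'_nonneg := fun α hα t ht => (hκ'C α hα t ht).le
      p_le_mul := fun α hα β hβ t ht => real_inner_le_div_mul_real_inner hβ hδ (hκδ α hα t ht)
      tendsto_p := fun α hα => tendsto_atTop_mono' atTop
        ((eventually_gt_atTop 0).mono fun t ht => (hκδ α hα t ht).le) (hκtop.const_mul_atTop hδ) }
  exact S.exists_tendsto_and_ne_zero fun t ht => hasDerivAt_pi.2 (hF t ht)

/-- Asymptotics along admissible curves for the system of ODEs satisfied by the
(normalized) Dunkl kernel vector field `F = (F_g)_{g ∈ G}`: the limit of `F(t)` as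
`t → ∞` exists, and is nonzero provided `F` is nonzero somewhere. -/
theorem dunkl_stmt6 (N : ℕ) (hN : 1 ≤ N)
    (G : Subgroup (EuclideanSpace ℝ (Fin N) ≃ₗᵢ[ℝ] EuclideanSpace ℝ (Fin N)))
    [Finite G]
    (R : Finset (EuclideanSpace ℝ (Fin N))) (hR0 : ∀ α ∈ R, α ≠ 0)
    (σ : EuclideanSpace ℝ (Fin N) → G)
    (hσ : ∀ α ∈ R, ∀ z : EuclideanSpace ℝ (Fin N),
      ((σ α : EuclideanSpace ℝ (Fin N) ≃ₗᵢ[ℝ] EuclideanSpace ℝ (Fin N)) z)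
        = z - ((2 * (inner ℝ α z : ℝ) / (inner ℝ α α : ℝ)) • α))
    (k : EuclideanSpace ℝ (Fin N) → ℝ) (hk : ∀ α ∈ R, 0 ≤ k α)
    (y : EuclideanSpace ℝ (Fin N))
    (hy : ∀ α ∈ R, ∀ g : G,
      (inner ℝ α ((g : EuclideanSpace ℝ (Fin N) ≃ₗᵢ[ℝ] EuclideanSpace ℝ (Fin N)) y) : ℝ) ≠ 0)
    (κ κ' : ℝ → EuclideanSpace ℝ (Fin N))
    (hκd : ∀ t ∈ Ioi (0 : ℝ), HasDerivAt κ (κ' t) t)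
    (hκ'c : ContinuousOn κ' (Ioi 0))
    (δ : ℝ) (hδ : 0 < δ)
    (hκδ : ∀ α ∈ R, ∀ t ∈ Ioi (0 : ℝ), δ * ‖κ t‖ < (inner ℝ α (κ t) : ℝ))
    (hκtop : Tendsto (fun t => ‖κ t‖) atTop atTop)
    (hκ'C : ∀ α ∈ R, ∀ t ∈ Ioi (0 : ℝ), 0 < (inner ℝ α (κ' t) : ℝ))
    (F : ℝ → G → ℂ)
    (hF : ∀ t ∈ Ioi (0 : ℝ), ∀ g : G,
      HasDerivAt (fun s => F s g)
        (∑ α ∈ R, (k α : ℂ) * (((inner ℝ α (κ' t) : ℝ) : ℂ) / ((inner ℝ α (κ t) : ℝ) : ℂ)) *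
          Complex.exp (-(Complex.I * ((inner ℝ α (κ t) : ℝ) : ℂ) *
            ((inner ℝ α ((g : EuclideanSpace ℝ (Fin N) ≃ₗᵢ[ℝ] EuclideanSpace ℝ (Fin N)) y) : ℝ) : ℂ))) *
          F t (σ α * g)) t) :
    ∃ L : G → ℂ, Tendsto F atTop (nhds L) ∧ ((∃ t₁ ∈ Ioi (0 : ℝ), F t₁ ≠ 0) → L ≠ 0) :=
  dunkl_stmt6_general N G R σ k hk y hy κ κ' hκd hκ'c δ hδ hκδ hκtop hκ'C F hF
end

section
/- Let k > 0 be real. Then for every u ∈ ℂ, D_k(u) = e^{u} Σ_{n=0}^∞ ((k)_n/((2k+1)_n n!)) (−2u)ⁿ, where (a)_n = a(a+1)···(a+n−1) denotes the Pochhammer symbol (rising factorial) and the series converges absolutely; that is, D_k(u) = e^{u} · ₁F₁(k, 2k+1, −2u) with the confluent hypergeometric series ₁F₁. -/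
/-!
The substitution `t = 1 - 2s` turns `D_k(u)` into `c_k 2^{2k} e^u ∫₀¹ e^{-2us} s^{k-1}(1-s)^k ds`,
with `c_k = Γ(k+1/2)/(Γ(1/2)Γ(k))`. Expanding `e^{-2us}` and integrating termwise (the norms of the
terms sum to at most `e^{2|u|}` times the Beta integral) produces the moments
`B(n+k, k+1) = (k)_n/(2k+1)_n · B(k, k+1)`, and Legendre's duplication formula gives
`c_k 2^{2k} B(k, k+1) = 1`.
-/

open MeasureTheory Filter Set

/-- The rank-one Dunkl kernel, defined by its integral representation. -/
noncomputable def Dk (k : ℝ) (u : ℂ) : ℂ :=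
  ((Real.Gamma (k + 1/2) / (Real.Gamma (1/2) * Real.Gamma k) : ℝ) : ℂ) *
    ∫ t in Icc (-1 : ℝ) 1,
      Complex.exp ((t : ℂ) * u) * (((1 - t) ^ (k - 1) * (1 + t) ^ k : ℝ) : ℂ)

/-- The coefficient of `zⁿ` in Kummer's series `₁F₁(a; b; z)`. -/
noncomputable def kummerCoeff (a b : ℝ) (n : ℕ) : ℝ :=
  (ascPochhammer ℝ n).eval a / ((ascPochhammer ℝ n).eval b * n.factorial)

section Pochhammer

variable {S : Type*} [CommSemiring S] [PartialOrder S] [IsOrderedRing S]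

theorem ascPochhammer_eval_nonneg {x : S} (hx : 0 ≤ x) (n : ℕ) :
    0 ≤ (ascPochhammer S n).eval x := by
  induction n with
  | zero => simp
  | succ n ih => rw [ascPochhammer_succ_eval]; positivity

theorem ascPochhammer_eval_le_eval {x y : S} (hx : 0 ≤ x) (hxy : x ≤ y) (n : ℕ) :
    (ascPochhammer S n).eval x ≤ (ascPochhammer S n).eval y := by
  induction n with
  | zero => simp
  | succ n ih =>
    simp only [ascPochhammer_succ_eval]
    gcongr
    exact ascPochhammer_eval_nonneg (hx.trans hxy) n

end Pochhammer

theorem abs_kummerCoeff_le {a b : ℝ} (ha : 0 ≤ a) (hab : a ≤ b) (n : ℕ) :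
    |kummerCoeff a b n| ≤ 1 / n.factorial := by
  have hpa := ascPochhammer_eval_nonneg ha n
  have hpb := ascPochhammer_eval_nonneg (ha.trans hab) n
  rw [kummerCoeff, abs_of_nonneg (by positivity), ← div_div]
  gcongr
  exact div_le_one_of_le₀ (ascPochhammer_eval_le_eval ha hab n) hpb

theorem summable_norm_kummerCoeff_mul_pow {a b : ℝ} (ha : 0 ≤ a) (hab : a ≤ b) (z : ℂ) :
    Summable fun n : ℕ => ‖(kummerCoeff a b n : ℂ) * z ^ n‖ := by
  refine .of_nonneg_of_le (fun n => norm_nonneg _) (fun n => ?_)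
    (Real.summable_pow_div_factorial ‖z‖)
  rw [norm_mul, norm_pow, Complex.norm_real, Real.norm_eq_abs, div_eq_inv_mul, ← one_div]
  exact mul_le_mul_of_nonneg_right (abs_kummerCoeff_le ha hab n) (by positivity)

theorem Real.Gamma_add_nat_eq_ascPochhammer_mul {x : ℝ} (hx : 0 < x) (n : ℕ) :
    Real.Gamma (x + n) = (ascPochhammer ℝ n).eval x * Real.Gamma x := by
  induction n with
  | zero => simp
  | succ n ih =>
    rw [Nat.cast_succ, ← add_assoc, Real.Gamma_add_one (by positivity), ih,
      ascPochhammer_succ_eval]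
    ring

theorem Real.integral_rpow_mul_one_sub_rpow {a b : ℝ} (ha : 0 < a) (hb : 0 < b) :
    ∫ s in Ioc (0 : ℝ) 1, s ^ (a - 1) * (1 - s) ^ (b - 1) =
      Real.Gamma a * Real.Gamma b / Real.Gamma (a + b) := by
  have hbeta : ((∫ s in Ioc (0 : ℝ) 1, s ^ (a - 1) * (1 - s) ^ (b - 1) : ℝ) : ℂ) =
      Complex.betaIntegral a b := by
    rw [← intervalIntegral.integral_of_le zero_le_one, ← intervalIntegral.integral_ofReal,
      Complex.betaIntegral]
    refine intervalIntegral.integral_congr fun s hs => ?_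
    rw [uIcc_of_le zero_le_one] at hs
    rw [Complex.ofReal_mul, Complex.ofReal_cpow hs.1, Complex.ofReal_cpow (by linarith [hs.2])]
    push_cast
    ring
  have hGamma := Complex.Gamma_mul_Gamma_eq_betaIntegral (s := a) (t := b)
    (by simpa using ha) (by simpa using hb)
  rw [← Complex.ofReal_add, Complex.Gamma_ofReal, Complex.Gamma_ofReal, Complex.Gamma_ofReal,
    ← hbeta] at hGamma
  have hpos := Real.Gamma_pos_of_pos (add_pos ha hb)
  rw [eq_div_iff hpos.ne']
  have hGamma' : Real.Gamma a * Real.Gamma b =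
      Real.Gamma (a + b) * ∫ s in Ioc (0 : ℝ) 1, s ^ (a - 1) * (1 - s) ^ (b - 1) := by
    exact_mod_cast hGamma
  linear_combination -hGamma'

theorem integral_pow_mul_rpow_mul_one_sub_rpow {a b : ℝ} (ha : 0 < a) (hb : 0 < b) (n : ℕ) :
    ∫ s in Ioc (0 : ℝ) 1, s ^ n * (s ^ (a - 1) * (1 - s) ^ (b - 1)) =
      (ascPochhammer ℝ n).eval a / (ascPochhammer ℝ n).eval (a + b) *
        (Real.Gamma a * Real.Gamma b / Real.Gamma (a + b)) := by
  have hint : ∀ s ∈ Ioc (0 : ℝ) 1, s ^ n * (s ^ (a - 1) * (1 - s) ^ (b - 1)) =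
      s ^ ((a + n) - 1) * (1 - s) ^ (b - 1) := fun s hs => by
    rw [← mul_assoc, ← Real.rpow_natCast, ← Real.rpow_add hs.1]
    ring_nf
  rw [setIntegral_congr_fun measurableSet_Ioc hint,
    Real.integral_rpow_mul_one_sub_rpow (by positivity) hb, add_right_comm,
    Real.Gamma_add_nat_eq_ascPochhammer_mul ha,
    Real.Gamma_add_nat_eq_ascPochhammer_mul (by positivity)]
  have := (ascPochhammer_pos n (a + b) (by positivity)).ne'
  have := (Real.Gamma_pos_of_pos (add_pos ha hb)).ne'
  field_simp

theorem integrableOn_rpow_mul_one_sub_rpow {a b : ℝ} (ha : 0 < a) (hb : 0 < b) :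
    IntegrableOn (fun s : ℝ => s ^ (a - 1) * (1 - s) ^ (b - 1)) (Ioc 0 1) :=
  -- the Bochner integral of a non-integrable function is `0`, and the Beta integral is not
  Integrable.of_integral_ne_zero <| by
    rw [Real.integral_rpow_mul_one_sub_rpow ha hb]
    exact (div_pos (mul_pos (Real.Gamma_pos_of_pos ha) (Real.Gamma_pos_of_pos hb))
      (Real.Gamma_pos_of_pos (add_pos ha hb))).ne'

theorem Real.Gamma_add_half_div_mul_two_rpow_mul_beta_eq_one {k : ℝ} (hk : 0 < k) :
    Real.Gamma (k + 1 / 2) / (Real.Gamma (1 / 2) * Real.Gamma k) * 2 ^ (2 * k) *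
      (Real.Gamma k * Real.Gamma (k + 1) / Real.Gamma (k + (k + 1))) = 1 := by
  have hdup := Real.Gamma_mul_Gamma_add_half k
  have htwo : (2 : ℝ) ^ (2 * k) * 2 ^ (1 - 2 * k) = 2 := by
    rw [← Real.rpow_add two_pos]; norm_num
  rw [Real.Gamma_one_half_eq, Real.Gamma_add_one hk.ne', show k + (k + 1) = 2 * k + 1 by ring,
    Real.Gamma_add_one (by positivity)]
  have := (Real.Gamma_pos_of_pos hk).ne'
  have := (Real.Gamma_pos_of_pos (by positivity : 0 < 2 * k)).ne'
  have := (Real.sqrt_pos.mpr Real.pi_pos).ne'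
  -- keeps `field_simp` from rewriting the arguments of `Γ`
  generalize Real.Gamma (k + 1 / 2) = A at *
  generalize Real.Gamma (2 * k) = B at *
  field_simp
  linear_combination (2 : ℝ) ^ (2 * k) * hdup + B * √Real.pi * htwo

theorem integral_cexp_mul_eq_tsum {μ : Measure ℝ} {w : ℝ → ℝ} (hw : Integrable w μ)
    (hμ : ∀ᵐ s ∂μ, |s| ≤ 1) (z : ℂ) :
    ∫ s, Complex.exp (z * s) * (w s : ℂ) ∂μ =
      ∑' n : ℕ, z ^ n / n.factorial * ((∫ s, s ^ n * w s ∂μ : ℝ) : ℂ) := by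
  have hpow_bound : ∀ n : ℕ, ∀ᵐ s ∂μ, ‖s ^ n‖ ≤ 1 := fun n => by
    filter_upwards [hμ] with s hs
    rw [norm_pow, Real.norm_eq_abs]
    exact pow_le_one₀ (abs_nonneg s) hs
  have hmoment : ∀ n : ℕ, Integrable (fun s => s ^ n * w s) μ := fun n =>
    hw.bdd_mul (by fun_prop) (hpow_bound n)
  set F : ℕ → ℝ → ℂ := fun n s => z ^ n / n.factorial * ((s ^ n * w s : ℝ) : ℂ)
  have hF : ∀ n, Integrable (F n) μ := fun n => (hmoment n).ofReal.const_mul _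
  have hF_norm : ∀ n, ∫ s, ‖F n s‖ ∂μ ≤ ‖z‖ ^ n / n.factorial * ∫ s, ‖w s‖ ∂μ := fun n => by
    have hnorm : ∀ s, ‖F n s‖ = ‖z‖ ^ n / n.factorial * ‖s ^ n * w s‖ := fun s => by
      simp only [F, norm_mul, norm_div, norm_pow, Complex.norm_natCast, Complex.norm_real]
    simp_rw [hnorm]
    rw [integral_const_mul]
    refine mul_le_mul_of_nonneg_left (integral_mono_ae (hmoment n).norm hw.norm ?_) (by positivity)
    filter_upwards [hpow_bound n] with s hs
    rw [norm_mul]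
    exact mul_le_of_le_one_left (norm_nonneg _) hs
  have hexp : ∀ s : ℝ, Complex.exp (z * s) * (w s : ℂ) = ∑' n, F n s := fun s => by
    rw [Complex.exp_eq_exp_ℂ, NormedSpace.exp_eq_tsum_div, ← tsum_mul_right]
    refine tsum_congr fun n => ?_
    simp only [F]
    push_cast
    ring
  simp_rw [hexp]
  rw [← integral_tsum_of_summable_integral_norm hF
    (.of_nonneg_of_le (fun n => integral_nonneg fun s => norm_nonneg _) hF_norm
      ((Real.summable_pow_div_factorial _).mul_right _))]
  refine tsum_congr fun n => ?_
  rw [integral_const_mul, integral_complex_ofReal]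

theorem integral_Icc_neg_one_one_eq_two_smul {E : Type*} [NormedAddCommGroup E]
    [NormedSpace ℝ E] (f : ℝ → E) :
    ∫ t in Icc (-1 : ℝ) 1, f t = (2 : ℝ) • ∫ s in Ioc (0 : ℝ) 1, f (1 - 2 * s) := by
  rw [integral_Icc_eq_integral_Ioc, ← intervalIntegral.integral_of_le (by norm_num),
    ← intervalIntegral.integral_of_le zero_le_one,
    intervalIntegral.integral_comp_sub_mul _ two_ne_zero, smul_smul]
  norm_num

theorem integral_cexp_mul_dunkl_weight (k : ℝ) (u : ℂ) :
    ∫ t in Icc (-1 : ℝ) 1, Complex.exp (t * u) * (((1 - t) ^ (k - 1) * (1 + t) ^ k : ℝ) : ℂ) =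
      ((2 ^ (2 * k) : ℝ) : ℂ) * Complex.exp u *
        ∫ s in Ioc (0 : ℝ) 1, Complex.exp (-2 * u * s) * ((s ^ (k - 1) * (1 - s) ^ k : ℝ) : ℂ) := by
  have hweight : ∀ s ∈ Ioc (0 : ℝ) 1,
      Complex.exp ((1 - 2 * s : ℝ) * u) *
          (((1 - (1 - 2 * s)) ^ (k - 1) * (1 + (1 - 2 * s)) ^ k : ℝ) : ℂ) =
        ((2 ^ (2 * k - 1) : ℝ) : ℂ) * Complex.exp u *
          (Complex.exp (-2 * u * s) * ((s ^ (k - 1) * (1 - s) ^ k : ℝ) : ℂ)) := fun s hs => by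
    have h1 : (1 - (1 - 2 * s)) ^ (k - 1) = (2 : ℝ) ^ (k - 1) * s ^ (k - 1) := by
      rw [← Real.mul_rpow zero_le_two hs.1.le]; ring_nf
    have h2 : (1 + (1 - 2 * s)) ^ k = (2 : ℝ) ^ k * (1 - s) ^ k := by
      rw [← Real.mul_rpow zero_le_two (by linarith [hs.2])]; ring_nf
    have h3 : (2 : ℝ) ^ (2 * k - 1) = 2 ^ (k - 1) * 2 ^ k := by
      rw [← Real.rpow_add two_pos]; ring_nf
    have h4 : ((1 - 2 * s : ℝ) : ℂ) * u = u + -2 * u * s := by push_cast; ring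
    rw [h1, h2, h3, h4, Complex.exp_add]
    push_cast
    ring
  have htwo : (2 : ℝ) ^ (2 * k) = 2 * 2 ^ (2 * k - 1) := by
    rw [mul_comm 2 (2 ^ _), ← Real.rpow_add_one two_ne_zero, sub_add_cancel]
  rw [integral_Icc_neg_one_one_eq_two_smul, setIntegral_congr_fun measurableSet_Ioc hweight,
    integral_const_mul, htwo, Complex.real_smul]
  push_cast
  ring

theorem dunkl_moment_mul_div_factorial_eq_kummerCoeff {k : ℝ} (hk : 0 < k) (n : ℕ) :
    Real.Gamma (k + 1 / 2) / (Real.Gamma (1 / 2) * Real.Gamma k) * 2 ^ (2 * k) *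
        (∫ s in Ioc (0 : ℝ) 1, s ^ n * (s ^ (k - 1) * (1 - s) ^ k)) / n.factorial =
      kummerCoeff k (2 * k + 1) n := by
  have hmoment := integral_pow_mul_rpow_mul_one_sub_rpow hk (by linarith : 0 < k + 1) n
  have hnorm := Real.Gamma_add_half_div_mul_two_rpow_mul_beta_eq_one hk
  rw [add_sub_cancel_right] at hmoment
  rw [show k + (k + 1) = 2 * k + 1 by ring] at hmoment hnorm
  rw [hmoment, kummerCoeff]
  linear_combination (ascPochhammer ℝ n).eval k / (ascPochhammer ℝ n).eval (2 * k + 1) /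
    n.factorial * hnorm

/-- The confluent hypergeometric representation of the rank-one Dunkl kernel:
`D_k(u) = e^u · ₁F₁(k, 2k+1, -2u)`, with the `₁F₁` series written via rising
factorials (Pochhammer symbols) and converging absolutely. -/
theorem dunkl_stmt9 (k : ℝ) (hk : 0 < k) (u : ℂ) :
    Summable (fun n : ℕ =>
      ‖((((ascPochhammer ℝ n).eval k /
          ((ascPochhammer ℝ n).eval (2 * k + 1) * (n.factorial : ℝ))) : ℝ) : ℂ) *
        (-2 * u) ^ n‖) ∧
    Dk k u = Complex.exp u *
      ∑' n : ℕ,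
        ((((ascPochhammer ℝ n).eval k /
            ((ascPochhammer ℝ n).eval (2 * k + 1) * (n.factorial : ℝ))) : ℝ) : ℂ) *
          (-2 * u) ^ n := by
  refine ⟨summable_norm_kummerCoeff_mul_pow hk.le (by linarith) (-2 * u), ?_⟩
  have hweight := integrableOn_rpow_mul_one_sub_rpow hk (by linarith : 0 < k + 1)
  rw [add_sub_cancel_right] at hweight
  have hsupp : ∀ᵐ s ∂(volume.restrict (Ioc (0 : ℝ) 1)), |s| ≤ 1 :=
    (ae_restrict_mem measurableSet_Ioc).mono fun s hs => abs_le.mpr ⟨by linarith [hs.1], hs.2⟩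
  rw [Dk, integral_cexp_mul_dunkl_weight,
    integral_cexp_mul_eq_tsum (w := fun s => s ^ (k - 1) * (1 - s) ^ k) hweight hsupp,
    ← tsum_mul_left, ← tsum_mul_left, ← tsum_mul_left]
  refine tsum_congr fun n => ?_
  change _ = Complex.exp u * ((kummerCoeff k (2 * k + 1) n : ℂ) * (-2 * u) ^ n)
  rw [← dunkl_moment_mul_div_factorial_eq_kummerCoeff hk n]
  push_cast
  ring
end

section
/- Let k > 0 be real and x, y > 0. Define c_k = ∫_ℝ e^{−u²/2} |u|^{2k} du, the rank-one Dunkl heat kernel Γ_k(t,x,y) = (2t)^{−(k+1/2)} c_k^{−1} e^{−(x²+y²)/(4t)} D_k(xy/(2t)) for t > 0, and the Gaussian heat kernel Γ₀(t,x,y) = (4πt)^{−1/2} e^{−(x−y)²/(4t)}. Then lim_{t→0⁺} (xy)^k Γ_k(t,x,y)/Γ₀(t,x,y) = 1. -/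
open MeasureTheory Filter Set

/-- The Mehta-type normalization constant `c_k = ∫_ℝ e^{-u²/2} |u|^{2k} du`. -/
noncomputable def cK (k : ℝ) : ℝ := ∫ u : ℝ, Real.exp (-u ^ 2 / 2) * |u| ^ (2 * k)

/-- The rank-one Dunkl heat kernel. -/
noncomputable def heatK (k : ℝ) (t x y : ℝ) : ℂ :=
  (((2 * t) ^ (-(k + 1/2)) : ℝ) : ℂ) * ((cK k : ℝ) : ℂ)⁻¹ *
    ((Real.exp (-(x ^ 2 + y ^ 2) / (4 * t)) : ℝ) : ℂ) * Dk k ((x * y / (2 * t) : ℝ) : ℂ)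

/-- The Gaussian heat kernel on `ℝ`. -/
noncomputable def heat0 (t x y : ℝ) : ℝ :=
  (4 * Real.pi * t) ^ (-(1/2) : ℝ) * Real.exp (-(x - y) ^ 2 / (4 * t))

/-!
With `u = xy/(2t)` the quotient equals `√(2π) c_k⁻¹ · u^k e^{-u} D_k(u)`, so everything reduces
to the growth of `D_k` on the positive axis. The substitution `s = u(1 - t)` turns
`u^k e^{-u} ∫ e^{tu} (1-t)^{k-1} (1+t)^k dt` into `∫₀^{2u} e^{-s} s^{k-1} (2 - s/u)^k ds`, which
tends to `2^k Γ(k)` by dominated convergence. Since `c_k = 2^{k+1/2} Γ(k+1/2)` and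
`Γ(1/2) = √π`, the constants cancel to `1`.
-/

open Topology

noncomputable def dunklConst (k : ℝ) : ℝ :=
  Real.Gamma (k + 1/2) / (Real.Gamma (1/2) * Real.Gamma k)

noncomputable def dunklIntegral (k u : ℝ) : ℝ :=
  ∫ t in Icc (-1 : ℝ) 1, Real.exp (t * u) * ((1 - t) ^ (k - 1) * (1 + t) ^ k)

lemma Dk_ofReal (k u : ℝ) :
    Dk k u = ((dunklConst k * dunklIntegral k u : ℝ) : ℂ) := by
  have h : (∫ t in Icc (-1 : ℝ) 1,
      Complex.exp ((t : ℂ) * u) * (((1 - t) ^ (k - 1) * (1 + t) ^ k : ℝ) : ℂ))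
      = ∫ t in Icc (-1 : ℝ) 1, ((Real.exp (t * u) * ((1 - t) ^ (k - 1) * (1 + t) ^ k) : ℝ) : ℂ) :=
    setIntegral_congr_fun measurableSet_Icc fun t _ => by push_cast; rfl
  rw [Dk, h, integral_complex_ofReal, dunklConst, dunklIntegral, Complex.ofReal_mul]

lemma cK_eq {k : ℝ} (hk : 0 < k) : cK k = 2 ^ (k + 1/2) * Real.Gamma (k + 1/2) := by
  have h_abs : cK k = 2 * ∫ u in Ioi (0 : ℝ), u ^ (2 * k) * Real.exp (-(1/2) * u ^ (2 : ℝ)) := by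
    rw [cK, ← integral_comp_abs (f := fun v => v ^ (2 * k) * Real.exp (-(1/2) * v ^ (2 : ℝ)))]
    congr 1 with u
    rw [Real.rpow_two, sq_abs, mul_comm]
    ring_nf
  rw [h_abs, integral_rpow_mul_exp_neg_mul_rpow two_pos (by linarith) (by norm_num),
    show (2 * k + 1) / 2 = k + 1/2 by ring, show -(2 * k + 1) / 2 = -(k + 1/2) by ring,
    one_div, Real.inv_rpow (by norm_num), Real.rpow_neg (by norm_num), inv_inv]
  ring

/-- The substitution `s = u (1 - t)`. -/
lemma rpow_mul_exp_neg_mul_dunklIntegral {k u : ℝ} (hu : 0 < u) :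
    u ^ k * Real.exp (-u) * dunklIntegral k u
      = ∫ s in Ioc (0 : ℝ) (2 * u), Real.exp (-s) * s ^ (k - 1) * (2 - s / u) ^ k := by
  set g : ℝ → ℝ := fun t => Real.exp (t * u) * ((1 - t) ^ (k - 1) * (1 + t) ^ k)
  have h_subst : dunklIntegral k u = u⁻¹ * ∫ s in (0 : ℝ)..(2 * u), g (1 - s / u) := by
    rw [intervalIntegral.integral_comp_sub_div g hu.ne', zero_div, sub_zero,
      show 1 - 2 * u / u = -1 by field_simp; ring, smul_eq_mul, inv_mul_cancel_left₀ hu.ne',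
      intervalIntegral.integral_of_le (by norm_num), ← integral_Icc_eq_integral_Ioc]
    rfl
  rw [h_subst, intervalIntegral.integral_of_le (by positivity), ← integral_const_mul,
    ← integral_const_mul]
  refine setIntegral_congr_fun measurableSet_Ioc fun s ⟨hs0, _⟩ => ?_
  have h_pow : u ^ k = u ^ (k - 1) * u := by rw [← Real.rpow_add_one hu.ne']; ring_nf
  simp only [g, show 1 - (1 - s / u) = s / u by ring, show 1 + (1 - s / u) = 2 - s / u by ring,
    Real.div_rpow hs0.le hu.le, h_pow, show (1 - s / u) * u = u - s by field_simp, Real.exp_sub,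
    Real.exp_neg]
  have : 0 < u ^ (k - 1) := Real.rpow_pos_of_pos hu _
  field_simp

lemma tendsto_integral_exp_neg_mul_rpow_mul_two_sub_div_rpow {a b : ℝ} (ha : 0 < a)
    (hb : 0 ≤ b) :
    Tendsto (fun u : ℝ => ∫ s in Ioc (0 : ℝ) (2 * u), Real.exp (-s) * s ^ (a - 1) * (2 - s / u) ^ b)
      atTop (𝓝 (2 ^ b * Real.Gamma a)) := by
  set F : ℝ → ℝ → ℝ := fun u =>
    (Ioc (0 : ℝ) (2 * u)).indicator fun s => Real.exp (-s) * s ^ (a - 1) * (2 - s / u) ^ b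
  set G : ℝ → ℝ := (Ioi (0 : ℝ)).indicator fun s => Real.exp (-s) * s ^ (a - 1) * 2 ^ b
  have h_meas : ∀ u, AEStronglyMeasurable (F u) volume := fun u =>
    (Measurable.indicator (by fun_prop) measurableSet_Ioc).aestronglyMeasurable
  have h_int : Integrable G volume :=
    (integrable_indicator_iff measurableSet_Ioi).mpr
      ((Real.GammaIntegral_convergent ha).mul_const _)
  have h_bound : ∀ᶠ u in atTop, ∀ᵐ s, ‖F u s‖ ≤ G s := by
    filter_upwards [eventually_gt_atTop (0 : ℝ)] with u hu
    refine Eventually.of_forall fun s => ?_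
    by_cases hs : s ∈ Ioc (0 : ℝ) (2 * u)
    · have hs0 : 0 < s := hs.1
      have h_div : s / u ≤ 2 := (div_le_iff₀ hu).mpr (by linarith [hs.2])
      have h_div' : 0 ≤ s / u := div_nonneg hs0.le hu.le
      simp only [F, G, indicator_of_mem hs, indicator_of_mem (mem_Ioi.mpr hs0)]
      rw [Real.norm_of_nonneg (by positivity)]
      gcongr
      linarith
    · simp only [F, G, indicator_of_notMem hs, norm_zero]
      exact indicator_nonneg (fun s (hs : 0 < s) => by positivity) s
  have h_lim : ∀ᵐ s, Tendsto (fun u => F u s) atTop (𝓝 (G s)) := by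
    refine Eventually.of_forall fun s => ?_
    by_cases hs : 0 < s
    · have h_two_sub : Tendsto (fun u : ℝ => 2 - s / u) atTop (𝓝 2) := by
        simpa using (tendsto_const_nhds (x := (2 : ℝ))).sub
          (tendsto_const_nhds (x := s).div_atTop tendsto_id)
      simp only [G, indicator_of_mem (mem_Ioi.mpr hs)]
      refine (((h_two_sub.rpow_const (p := b) (Or.inl two_ne_zero)).const_mul
        (Real.exp (-s) * s ^ (a - 1))).congr' ?_)
      filter_upwards [eventually_ge_atTop s] with u hu
      exact (indicator_of_mem (mem_Ioc.mpr ⟨hs, by linarith⟩) (f := fun s => _)).symm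
    · simp [F, G, hs]
  have h_G : ∫ s, G s = 2 ^ b * Real.Gamma a := by
    rw [integral_indicator measurableSet_Ioi, integral_mul_const, ← Real.Gamma_eq_integral ha,
      mul_comm]
  rw [← h_G]
  refine (tendsto_integral_filter_of_dominated_convergence G (.of_forall h_meas) h_bound h_int
    h_lim).congr fun u => ?_
  exact integral_indicator measurableSet_Ioc

lemma sqrt_two_pi_div_cK_mul_dunklConst_mul {k : ℝ} (hk : 0 < k) :
    Real.sqrt (2 * Real.pi) / cK k * dunklConst k * (2 ^ k * Real.Gamma k) = 1 := by
  have : 0 < Real.Gamma (k + 1/2) := Real.Gamma_pos_of_pos (by linarith)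
  have : 0 < Real.Gamma k := Real.Gamma_pos_of_pos hk
  have : 0 < Real.sqrt Real.pi := Real.sqrt_pos.mpr Real.pi_pos
  have : 0 < Real.sqrt 2 := Real.sqrt_pos.mpr two_pos
  have : (0 : ℝ) < 2 ^ k := Real.rpow_pos_of_pos two_pos k
  rw [cK_eq hk, dunklConst, Real.Gamma_one_half_eq, Real.rpow_add two_pos, ← Real.sqrt_eq_rpow,
    Real.sqrt_mul zero_le_two]
  field_simp

lemma tendsto_rpow_mul_exp_neg_mul_dunkl {k : ℝ} (hk : 0 < k) :
    Tendsto (fun u : ℝ => Real.sqrt (2 * Real.pi) / cK k *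
      (u ^ k * Real.exp (-u) * (dunklConst k * dunklIntegral k u))) atTop (𝓝 1) := by
  have h_lim := (tendsto_integral_exp_neg_mul_rpow_mul_two_sub_div_rpow hk hk.le).const_mul
    (Real.sqrt (2 * Real.pi) / cK k * dunklConst k)
  rw [sqrt_two_pi_div_cK_mul_dunklConst_mul hk] at h_lim
  refine h_lim.congr' ?_
  filter_upwards [eventually_gt_atTop (0 : ℝ)] with u hu
  rw [← rpow_mul_exp_neg_mul_dunklIntegral hu]
  ring

lemma rpow_mul_heatK_div_heat0 (k : ℝ) {t x y : ℝ} (ht : 0 < t) (hxy : 0 ≤ x * y) :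
    (((x * y) ^ k : ℝ) : ℂ) * heatK k t x y / ((heat0 t x y : ℝ) : ℂ)
      = ((Real.sqrt (2 * Real.pi) / cK k * ((x * y / (2 * t)) ^ k *
          Real.exp (-(x * y / (2 * t))) * (dunklConst k * dunklIntegral k (x * y / (2 * t)))) :
        ℝ) : ℂ) := by
  have h_exp : Real.exp (-(x ^ 2 + y ^ 2) / (4 * t))
      = Real.exp (-(x - y) ^ 2 / (4 * t)) * Real.exp (-(x * y / (2 * t))) := by
    rw [← Real.exp_add]
    congr 1
    field_simp
    ring
  have h_pow : (2 * t) ^ (-(k + 1/2)) = (2 * t) ^ (-k) * (Real.sqrt (2 * t))⁻¹ := by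
    rw [neg_add, Real.rpow_add (by positivity), Real.sqrt_eq_rpow, ← Real.rpow_neg (by positivity)]
  have h_heat0 : (4 * Real.pi * t) ^ (-(1/2) : ℝ)
      = (Real.sqrt (2 * Real.pi) * Real.sqrt (2 * t))⁻¹ := by
    rw [← Real.sqrt_mul (by positivity), Real.sqrt_eq_rpow, Real.rpow_neg (by positivity)]
    ring_nf
  have : 0 < Real.sqrt (2 * t) := Real.sqrt_pos.mpr (by positivity)
  have : 0 < Real.sqrt (2 * Real.pi) := Real.sqrt_pos.mpr (by positivity)
  rw [heatK, Dk_ofReal]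
  simp only [← Complex.ofReal_mul, ← Complex.ofReal_inv, ← Complex.ofReal_div, Complex.ofReal_inj]
  rw [heat0, h_exp, h_pow, h_heat0, Real.div_rpow hxy (by positivity),
    Real.rpow_neg (by positivity)]
  field_simp

/-- Short-time asymptotics of the rank-one Dunkl heat kernel: after multiplication by
`(xy)^k`, the quotient of the Dunkl heat kernel `Γ_k(t,x,y)` by the Gaussian heat kernel
`Γ₀(t,x,y)` tends to `1` as `t → 0⁺`. -/
theorem dunkl_stmt13 (k : ℝ) (hk : 0 < k) (x y : ℝ) (hx : 0 < x) (hy : 0 < y) :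
    Tendsto (fun t : ℝ =>
        (((x * y) ^ k : ℝ) : ℂ) * heatK k t x y / ((heat0 t x y : ℝ) : ℂ))
      (nhdsWithin 0 (Ioi 0)) (nhds 1) := by
  have hxy : 0 < x * y := mul_pos hx hy
  have h_u : Tendsto (fun t : ℝ => x * y / (2 * t)) (𝓝[>] 0) atTop := by
    refine (tendsto_inv_nhdsGT_zero.const_mul_atTop (by positivity : 0 < x * y / 2)).congr
      fun t => ?_
    ring
  have h_real := (tendsto_rpow_mul_exp_neg_mul_dunkl hk).comp h_u
  rw [← Complex.ofReal_one]
  refine ((Complex.continuous_ofReal.tendsto 1).comp h_real).congr' ?_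
  filter_upwards [self_mem_nhdsWithin] with t ht
  exact (rpow_mul_heatK_div_heat0 k ht hxy.le).symm
end

section
/- Let k > 0 be real. Then there exists a constant M > 0 such that s^{2k} |D_k(is)|² ≤ M for all s > 0. -/
open MeasureTheory Filter Set

/-!
After the substitution `u = 1 + t`, the integral in `D_k(is)` is, up to a phase,
`∫₀² e^{isu} u^k (2 - u)^{k-1} du`. A smooth partition of unity separates the two endpoint
singularities; after the reflection `u ↦ 2 - u` (and a complex conjugation) each piece has the form
`∫₀² e^{isv} v^a φ(v) dv` with `a > -1` and `φ` smooth and vanishing near `2`, and such an integral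
is `O(s^{-(a+1)})`. For `a > 0`, one integration by parts without boundary terms replaces `v^a φ`
by `v^{a-1} (a φ + v φ')` at the cost of a factor `1/s`. For `-1 < a ≤ 0`, split at `1/s`: the part
near `0` is at most a multiple of `∫₀^{1/s} v^a dv`, and on `[1/s, 2]` one integration by parts
gives `s⁻¹ (|v^a φ| at 1/s + ∫ |(v^a φ)'|) = O(s^{-(a+1)})`, because `∫_{1/s}^2 |a| v^{a-1} dv`
is at most `s^{-a}`. The two pieces are `O(s^{-k-1})` and `O(s^{-k})`, and for bounded `s` the
integral is at most `∫ (1 - t)^{k-1} (1 + t)^k dt`.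
-/

open Complex Asymptotics
open scoped Interval Topology ContDiff ComplexConjugate

theorem norm_cexp_ofReal_mul_ofReal_mul_I (s v : ℝ) : ‖cexp (s * v * I)‖ = 1 := by
  rw [← ofReal_mul, norm_exp_ofReal_mul_I]

theorem IntervalIntegrable.ofReal {f : ℝ → ℝ} {c d : ℝ} (hf : IntervalIntegrable f volume c d) :
    IntervalIntegrable (fun v => (f v : ℂ)) volume c d :=
  ⟨hf.1.ofReal, hf.2.ofReal⟩

section Oscillatory

variable {s c d : ℝ} {u u' : ℝ → ℂ}

theorem integral_cexp_mul_I_mul_eq (hs : s ≠ 0) (hu : ContinuousOn u [[c, d]])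
    (hu' : ∀ x ∈ Ioo (min c d) (max c d), HasDerivAt u (u' x) x)
    (hint : IntervalIntegrable u' volume c d) :
    ∫ v in c..d, cexp (s * v * I) * u v =
      (cexp (s * d * I) * u d - cexp (s * c * I) * u c) / (s * I) -
        (s * I)⁻¹ * ∫ v in c..d, cexp (s * v * I) * u' v := by
  have hsI : (s * I : ℂ) ≠ 0 := mul_ne_zero (ofReal_ne_zero.mpr hs) I_ne_zero
  have hw : ∀ x : ℝ, HasDerivAt (fun v : ℝ => cexp (s * v * I) / (s * I)) (cexp (s * x * I)) x := by
    intro x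
    have := (((hasDerivAt_id (x : ℂ)).const_mul (s : ℂ)).mul_const I).cexp.comp_ofReal.div_const
      (s * I)
    simpa [mul_div_assoc, hsI] using this
  have hcont : Continuous fun v : ℝ => cexp (s * v * I) := by fun_prop
  have := intervalIntegral.integral_mul_deriv_eq_deriv_mul_of_hasDerivAt hu
    (fun x _ => (hw x).continuousAt.continuousWithinAt) hu' (fun x _ => hw x) hint
    (hcont.intervalIntegrable _ _)
  simp_rw [mul_comm (cexp _)] at this ⊢
  rw [this, ← intervalIntegral.integral_const_mul]
  simp_rw [mul_div_assoc', div_eq_inv_mul]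
  ring_nf

theorem norm_integral_cexp_mul_I_mul_le (hs : 0 < s) (hcd : c ≤ d) (hu : ContinuousOn u [[c, d]])
    (hu' : ∀ x ∈ Ioo c d, HasDerivAt u (u' x) x) (hint : IntervalIntegrable u' volume c d) :
    ‖∫ v in c..d, cexp (s * v * I) * u v‖ ≤ s⁻¹ * (‖u c‖ + ‖u d‖ + ∫ v in c..d, ‖u' v‖) := by
  rw [integral_cexp_mul_I_mul_eq hs.ne' hu (by simpa [hcd] using hu') hint]
  have hnorm : ‖(s * I : ℂ)‖ = s := by simp [hs.le]
  calc _ ≤ ‖(cexp (s * d * I) * u d - cexp (s * c * I) * u c) / (s * I)‖ +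
        ‖(s * I)⁻¹ * ∫ v in c..d, cexp (s * v * I) * u' v‖ := norm_sub_le _ _
    _ ≤ s⁻¹ * (‖u d‖ + ‖u c‖) + s⁻¹ * ∫ v in c..d, ‖u' v‖ := by
      rw [norm_div, hnorm, norm_mul, norm_inv, hnorm, div_eq_inv_mul]
      gcongr
      · refine (norm_sub_le _ _).trans_eq ?_
        simp only [norm_mul, norm_cexp_ofReal_mul_ofReal_mul_I, one_mul]
      · refine (intervalIntegral.norm_integral_le_integral_norm hcd).trans_eq ?_
        simp only [norm_mul, norm_cexp_ofReal_mul_ofReal_mul_I, one_mul]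
    _ = _ := by ring

end Oscillatory

section EndpointSingularity

variable {a b s : ℝ} {φ : ℝ → ℝ}

theorem hasDerivAt_rpow_mul {v : ℝ} (hv : 0 < v) (hφ : DifferentiableAt ℝ φ v) :
    HasDerivAt (fun v => v ^ a * φ v) (v ^ (a - 1) * (a * φ v + v * deriv φ v)) v := by
  refine ((Real.hasDerivAt_rpow_const (Or.inl hv.ne')).mul hφ.hasDerivAt).congr_deriv ?_
  rw [Real.rpow_sub_one hv.ne']
  field_simp

theorem norm_integral_le_mul_rpow_of_norm_le {E : Type*} [NormedAddCommGroup E] [NormedSpace ℝ E]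
    {f : ℝ → E} {c M : ℝ} (ha : -1 < a) (hc : 0 ≤ c)
    (hf : ∀ v ∈ Ioc 0 c, ‖f v‖ ≤ M * v ^ a) :
    ‖∫ v in 0..c, f v‖ ≤ M * c ^ (a + 1) / (a + 1) := by
  refine (intervalIntegral.norm_integral_le_of_norm_le hc (ae_of_all _ hf)
    ((intervalIntegral.intervalIntegrable_rpow' ha).const_mul M)).trans_eq ?_
  rw [intervalIntegral.integral_const_mul, integral_rpow (Or.inl ha),
    Real.zero_rpow (by linarith), sub_zero, mul_div_assoc]

theorem integral_cexp_mul_I_rpow_mul_eq_of_pos (ha : 0 < a) (hb : 0 ≤ b) (hs : s ≠ 0)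
    (hφ : ContDiff ℝ 1 φ) (hφb : φ b = 0) :
    ∫ v in 0..b, cexp (s * v * I) * ((v ^ a * φ v : ℝ) : ℂ) =
      -((s * I)⁻¹ * ∫ v in 0..b, cexp (s * v * I) *
        ((v ^ (a - 1) * (a * φ v + v * deriv φ v) : ℝ) : ℂ)) := by
  have hcont : ContinuousOn (fun v : ℝ => ((v ^ a * φ v : ℝ) : ℂ)) [[0, b]] :=
    (continuous_ofReal.comp ((Real.continuous_rpow_const ha.le).mul hφ.continuous)).continuousOn
  have hderiv : ∀ x ∈ Ioo (min 0 b) (max 0 b), HasDerivAt (fun v : ℝ => ((v ^ a * φ v : ℝ) : ℂ))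
      (((x ^ (a - 1) * (a * φ x + x * deriv φ x) : ℝ) : ℂ)) x := by
    intro x hx
    rw [min_eq_left hb] at hx
    exact (hasDerivAt_rpow_mul hx.1 (hφ.differentiable one_ne_zero x)).ofReal_comp
  have hint : IntervalIntegrable (fun v : ℝ => v ^ (a - 1) * (a * φ v + v * deriv φ v))
      volume 0 b :=
    (intervalIntegral.intervalIntegrable_rpow' (by linarith)).mul_continuousOn
      (by
        have := hφ.continuous
        have := hφ.continuous_deriv le_rfl
        exact Continuous.continuousOn (by fun_prop))
  rw [integral_cexp_mul_I_mul_eq hs hcont hderiv hint.ofReal]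
  simp [hφb, Real.zero_rpow ha.ne']

theorem intervalIntegrable_cexp_mul_I_rpow_mul (ha : -1 < a) (hφ : Continuous φ) (c d : ℝ) :
    IntervalIntegrable (fun v : ℝ => cexp (s * v * I) * ((v ^ a * φ v : ℝ) : ℂ)) volume c d :=
  ((intervalIntegral.intervalIntegrable_rpow' ha).mul_continuousOn
    hφ.continuousOn).ofReal.continuousOn_mul (by fun_prop)

theorem integral_abs_deriv_rpow_mul_le_of_nonpos (ha : -1 < a) (ha0 : a ≤ 0) {c M M' : ℝ}
    (hc : 0 < c) (hcb : c ≤ b) (hφ : ContDiff ℝ 1 φ)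
    (hM : ∀ v ∈ Icc c b, |φ v| ≤ M) (hM' : ∀ v ∈ Icc c b, |deriv φ v| ≤ M') :
    ∫ v in c..b, |v ^ (a - 1) * (a * φ v + v * deriv φ v)| ≤
      M * c ^ a + M' * b ^ (a + 1) / (a + 1) := by
  have hpos : ∀ v ∈ [[c, b]], 0 < v := fun v hv => hc.trans_le (uIcc_of_le hcb ▸ hv).1
  have hint : ∀ p : ℝ, IntervalIntegrable (fun v : ℝ => v ^ p) volume c b := fun p =>
    intervalIntegral.intervalIntegrable_rpow (Or.inr fun h0 => (hpos 0 h0).false)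
  have hψ : Continuous fun v => a * φ v + v * deriv φ v := by
    have := hφ.continuous
    have := hφ.continuous_deriv le_rfl
    fun_prop
  have hM0 : 0 ≤ M := (abs_nonneg _).trans (hM b ⟨hcb, le_rfl⟩)
  have hM'0 : 0 ≤ M' := (abs_nonneg _).trans (hM' b ⟨hcb, le_rfl⟩)
  have hle : ∫ v in c..b, |v ^ (a - 1) * (a * φ v + v * deriv φ v)| ≤
      ∫ v in c..b, (-a * M * v ^ (a - 1) + M' * v ^ a) := by
    refine intervalIntegral.integral_mono_on hcb
      ((hint (a - 1)).mul_continuousOn hψ.continuousOn).abs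
      (((hint (a - 1)).const_mul _).add ((hint a).const_mul _)) fun v hv => ?_
    have hv0 : 0 < v := hc.trans_le hv.1
    rw [abs_mul, abs_of_pos (Real.rpow_pos_of_pos hv0 _)]
    calc v ^ (a - 1) * |a * φ v + v * deriv φ v|
        ≤ v ^ (a - 1) * (-a * M + v * M') := by
          gcongr
          refine (abs_add_le _ _).trans ?_
          rw [abs_mul, abs_mul, abs_of_nonpos ha0, abs_of_pos hv0]
          gcongr
          · linarith
          · exact hM v hv
          · exact hM' v hv
      _ = -a * M * v ^ (a - 1) + M' * v ^ a := by
          rw [Real.rpow_sub_one hv0.ne']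
          field_simp
  have hFTC : a * ∫ v in c..b, v ^ (a - 1) = b ^ a - c ^ a := by
    rw [← intervalIntegral.integral_const_mul]
    exact intervalIntegral.integral_eq_sub_of_hasDerivAt
      (fun v hv => Real.hasDerivAt_rpow_const (Or.inl (hpos v hv).ne'))
      ((hint (a - 1)).const_mul a)
  rw [intervalIntegral.integral_add ((hint (a - 1)).const_mul _) ((hint a).const_mul _),
    intervalIntegral.integral_const_mul, intervalIntegral.integral_const_mul,
    integral_rpow (Or.inl ha)] at hle
  have hb0 : 0 ≤ b ^ a := Real.rpow_nonneg (hc.le.trans hcb) a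
  have hc1 : 0 ≤ c ^ (a + 1) := Real.rpow_nonneg hc.le _
  have hM'b : M' * ((b ^ (a + 1) - c ^ (a + 1)) / (a + 1)) ≤ M' * b ^ (a + 1) / (a + 1) := by
    rw [mul_div_assoc]
    exact mul_le_mul_of_nonneg_left (div_le_div_of_nonneg_right (by linarith) (by linarith)) hM'0
  nlinarith [mul_nonneg hM0 hb0]

theorem norm_integral_cexp_mul_I_rpow_mul_le_of_nonpos (ha : -1 < a) (ha0 : a ≤ 0) {c M M' : ℝ}
    (hc : 0 < c) (hcb : c ≤ b) (hs : 0 < s) (hφ : ContDiff ℝ 1 φ) (hφb : φ b = 0)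
    (hM : ∀ v ∈ Icc c b, |φ v| ≤ M) (hM' : ∀ v ∈ Icc c b, |deriv φ v| ≤ M') :
    ‖∫ v in c..b, cexp (s * v * I) * ((v ^ a * φ v : ℝ) : ℂ)‖ ≤
      s⁻¹ * (2 * M * c ^ a + M' * b ^ (a + 1) / (a + 1)) := by
  have hpos : ∀ v ∈ [[c, b]], 0 < v := fun v hv => hc.trans_le (uIcc_of_le hcb ▸ hv).1
  have h0 : (0 : ℝ) ∉ [[c, b]] := fun h0 => (hpos 0 h0).false
  have hψ : Continuous fun v => a * φ v + v * deriv φ v := by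
    have := hφ.continuous
    have := hφ.continuous_deriv le_rfl
    fun_prop
  refine (norm_integral_cexp_mul_I_mul_le hs hcb
    (continuous_ofReal.comp_continuousOn ((continuousOn_id.rpow_const fun v hv =>
      Or.inl (hpos v hv).ne').mul hφ.continuous.continuousOn))
    (fun x hx => (hasDerivAt_rpow_mul (hc.trans hx.1)
      (hφ.differentiable one_ne_zero x)).ofReal_comp)
    ((intervalIntegral.intervalIntegrable_rpow (Or.inr h0)).mul_continuousOn
      hψ.continuousOn).ofReal).trans (mul_le_mul_of_nonneg_left ?_ (inv_nonneg.mpr hs.le))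
  have hend : |c ^ a * φ c| ≤ M * c ^ a := by
    rw [abs_mul, abs_of_pos (Real.rpow_pos_of_pos hc a), mul_comm M]
    exact mul_le_mul_of_nonneg_left (hM c ⟨le_rfl, hcb⟩) (Real.rpow_nonneg hc.le a)
  simp only [Function.comp_apply, Pi.mul_apply, id, hφb, mul_zero, ofReal_zero, norm_zero,
    add_zero, norm_real, Real.norm_eq_abs]
  linarith [integral_abs_deriv_rpow_mul_le_of_nonpos ha ha0 hc hcb hφ hM hM']

theorem isBigO_integral_cexp_mul_I_rpow_mul_of_nonpos (ha : -1 < a) (ha0 : a ≤ 0) (hb : 0 < b)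
    (hφ : ContDiff ℝ 1 φ) (hφb : φ b = 0) :
    (fun s : ℝ => ∫ v in 0..b, cexp (s * v * I) * ((v ^ a * φ v : ℝ) : ℂ)) =O[atTop]
      (· ^ (-(a + 1))) := by
  obtain ⟨M, hM⟩ := isCompact_Icc.exists_bound_of_continuousOn (hφ.continuous.continuousOn
    (s := Icc 0 b))
  obtain ⟨M', hM'⟩ := isCompact_Icc.exists_bound_of_continuousOn
    ((hφ.continuous_deriv le_rfl).continuousOn (s := Icc 0 b))
  have ha1 : 0 < a + 1 := by linarith
  refine .of_bound (M / (a + 1) + 2 * M + M' * b ^ (a + 1) / (a + 1)) ?_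
  filter_upwards [eventually_ge_atTop 1, eventually_ge_atTop b⁻¹] with s hs1 hsb
  have hs : 0 < s := one_pos.trans_le hs1
  have hc : 0 < s⁻¹ := inv_pos.mpr hs
  have hcb : s⁻¹ ≤ b := inv_le_of_inv_le₀ hb hsb
  have hint := intervalIntegrable_cexp_mul_I_rpow_mul (s := s) ha hφ.continuous
  have hsmall := norm_integral_le_mul_rpow_of_norm_le (M := M) (f := fun v : ℝ =>
      cexp (s * v * I) * ((v ^ a * φ v : ℝ) : ℂ)) ha hc.le fun v hv => by
    rw [norm_mul, norm_cexp_ofReal_mul_ofReal_mul_I, one_mul, norm_real, Real.norm_eq_abs,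
      abs_mul, abs_of_pos (Real.rpow_pos_of_pos hv.1 a), mul_comm M]
    exact mul_le_mul_of_nonneg_left (hM v ⟨hv.1.le, hv.2.trans hcb⟩) (Real.rpow_nonneg hv.1.le a)
  have htail := norm_integral_cexp_mul_I_rpow_mul_le_of_nonpos ha ha0 hc hcb hs hφ hφb
    (fun v hv => hM v ⟨hc.le.trans hv.1, hv.2⟩) (fun v hv => hM' v ⟨hc.le.trans hv.1, hv.2⟩)
  have hpow : s ^ (-(a + 1)) = s⁻¹ ^ (a + 1) := by rw [Real.rpow_neg hs.le, Real.inv_rpow hs.le]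
  have hinv : s⁻¹ ≤ s⁻¹ ^ (a + 1) := by
    simpa using Real.rpow_le_rpow_of_exponent_ge hc (inv_le_one_of_one_le₀ hs1) (by linarith :
      a + 1 ≤ 1)
  have hM0 : 0 ≤ M := (norm_nonneg _).trans (hM b ⟨hb.le, le_rfl⟩)
  have hK : 0 ≤ M' * b ^ (a + 1) / (a + 1) :=
    div_nonneg (mul_nonneg ((norm_nonneg _).trans (hM' b ⟨hb.le, le_rfl⟩))
      (Real.rpow_nonneg hb.le _)) ha1.le
  rw [← intervalIntegral.integral_add_adjacent_intervals (hint 0 s⁻¹) (hint s⁻¹ b),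
    Real.norm_of_nonneg (Real.rpow_nonneg hs.le _), hpow]
  calc _ ≤ _ := norm_add_le _ _
    _ ≤ M * s⁻¹ ^ (a + 1) / (a + 1) + s⁻¹ * (2 * M * s⁻¹ ^ a + M' * b ^ (a + 1) / (a + 1)) :=
      add_le_add hsmall htail
    _ = (M / (a + 1) + 2 * M) * s⁻¹ ^ (a + 1) + s⁻¹ * (M' * b ^ (a + 1) / (a + 1)) := by
      rw [Real.rpow_add_one hc.ne']
      ring
    _ ≤ _ := by nlinarith

theorem isBigO_integral_cexp_mul_I_rpow_mul (ha : -1 < a) (hb : 0 < b) (hφ : ContDiff ℝ ∞ φ)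
    (hφb : φ =ᶠ[𝓝 b] 0) :
    (fun s : ℝ => ∫ v in 0..b, cexp (s * v * I) * ((v ^ a * φ v : ℝ) : ℂ)) =O[atTop]
      (· ^ (-(a + 1))) := by
  obtain ⟨n, hn⟩ := exists_nat_ge a
  induction n generalizing a φ with
  | zero =>
    exact isBigO_integral_cexp_mul_I_rpow_mul_of_nonpos ha (mod_cast hn) hb
      (hφ.of_le (by simp)) hφb.eq_of_nhds
  | succ n ih =>
    rcases le_or_gt a 0 with ha0 | ha0
    · exact isBigO_integral_cexp_mul_I_rpow_mul_of_nonpos ha ha0 hb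
        (hφ.of_le (by simp)) hφb.eq_of_nhds
    have hψ : ContDiff ℝ ∞ fun v => a * φ v + v * deriv φ v := by
      have := (contDiff_infty_iff_deriv.mp hφ).2
      fun_prop
    have hψb : (fun v => a * φ v + v * deriv φ v) =ᶠ[𝓝 b] 0 := by
      filter_upwards [hφb, hφb.deriv] with v h0 h1
      simp [h0, h1]
    have hinv : (fun s : ℝ => -(s * I : ℂ)⁻¹) =O[atTop] (· ^ (-1 : ℝ)) := by
      refine .of_bound 1 ?_
      filter_upwards [eventually_gt_atTop 0] with s hs
      simp [Real.rpow_neg_one, abs_of_pos hs]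
    have hIH := ih (a := a - 1) (by linarith) hψ hψb (by push_cast at hn; linarith)
    refine (hinv.mul hIH).congr' ?_ ?_
    · filter_upwards [eventually_gt_atTop 0] with s hs
      rw [integral_cexp_mul_I_rpow_mul_eq_of_pos ha0 hb.le hs.ne' (hφ.of_le (by simp))
        hφb.eq_of_nhds, neg_mul]
    · filter_upwards [eventually_gt_atTop 0] with s hs
      rw [← Real.rpow_add hs]
      ring_nf

end EndpointSingularity

theorem integral_cexp_mul_I_comp_sub_left (g : ℝ → ℝ) (s b : ℝ) :
    ∫ u in 0..b, cexp (s * u * I) * (g (b - u) : ℂ) =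
      cexp (s * b * I) * conj (∫ v in 0..b, cexp (s * v * I) * (g v : ℂ)) := by
  rw [← intervalIntegral.intervalIntegral_conj, ← intervalIntegral.integral_const_mul]
  have hrefl : ∀ u : ℝ, cexp (s * u * I) * (g (b - u) : ℂ) =
      cexp (s * b * I) * conj (cexp (s * ↑(b - u) * I) * (g (b - u) : ℂ)) := by
    intro u
    rw [map_mul, ← exp_conj, conj_ofReal, ← mul_assoc, ← exp_add]
    simp only [map_mul, conj_ofReal, conj_I]
    push_cast
    ring_nf
  simp_rw [hrefl]
  rw [intervalIntegral.integral_comp_sub_left (fun v : ℝ =>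
    cexp (s * b * I) * conj (cexp (s * v * I) * (g v : ℂ))) b]
  simp

theorem ContDiff.mul_rpow_sub {g : ℝ → ℝ} {b c p : ℝ} (hg : ContDiff ℝ ∞ g) (hcb : c < b)
    (hg0 : ∀ u, c ≤ u → g u = 0) : ContDiff ℝ ∞ fun u => g u * (b - u) ^ p := by
  refine contDiff_iff_contDiffAt.mpr fun x => ?_
  rcases lt_or_ge x b with hx | hx
  · exact hg.contDiffAt.mul ((contDiffAt_const.sub contDiffAt_id).rpow_const_of_ne
      (sub_ne_zero.mpr hx.ne'))
  · refine contDiffAt_const (c := (0 : ℝ)).congr_of_eventuallyEq ?_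
    filter_upwards [Ioi_mem_nhds (hcb.trans_le hx)] with u hu
    simp [hg0 u (le_of_lt hu)]

theorem exists_forall_rpow_mul_norm_le_of_isBigO {E : Type*} [NormedAddCommGroup E] {f : ℝ → E}
    {k W : ℝ} (hk : 0 ≤ k) (hf : f =O[atTop] (· ^ (-k))) (hW : ∀ s, ‖f s‖ ≤ W) :
    ∃ B, ∀ s, 0 < s → s ^ k * ‖f s‖ ≤ B := by
  obtain ⟨C, hC⟩ := hf.bound
  obtain ⟨s₀, hs₀⟩ := eventually_atTop.mp hC
  refine ⟨max C (max s₀ 0 ^ k * W), fun s hs => ?_⟩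
  rcases le_total s₀ s with h | h
  · have hCs := hs₀ s h
    rw [Real.norm_of_nonneg (Real.rpow_nonneg hs.le _)] at hCs
    calc s ^ k * ‖f s‖ ≤ s ^ k * (C * s ^ (-k)) := by gcongr
      _ = C := by rw [mul_left_comm, ← Real.rpow_add hs, add_neg_cancel, Real.rpow_zero, mul_one]
      _ ≤ _ := le_max_left _ _
  · exact le_max_of_le_right (mul_le_mul (Real.rpow_le_rpow hs.le (h.trans (le_max_left _ _)) hk)
      (hW s) (norm_nonneg _) (Real.rpow_nonneg (le_max_right _ _) _))

section Dunkl

variable {k : ℝ}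

theorem integral_Icc_cexp_mul_weight_eq {s : ℝ} {φ₁ φ₂ : ℝ → ℝ} (hk : 0 < k)
    (hφ₁ : Continuous φ₁) (hφ₂ : Continuous φ₂)
    (hw : ∀ u, u ^ k * (2 - u) ^ (k - 1) = u ^ k * φ₁ u + (2 - u) ^ (k - 1) * φ₂ (2 - u)) :
    ∫ t in Icc (-1 : ℝ) 1, cexp (t * (I * s)) * (((1 - t) ^ (k - 1) * (1 + t) ^ k : ℝ) : ℂ) =
      cexp (-(s * I)) * ((∫ u in 0..2, cexp (s * u * I) * ((u ^ k * φ₁ u : ℝ) : ℂ)) +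
        cexp (s * 2 * I) *
          conj (∫ v in 0..2, cexp (s * v * I) * ((v ^ (k - 1) * φ₂ v : ℝ) : ℂ))) := by
  have hint₂ : IntervalIntegrable (fun u : ℝ =>
      cexp (s * u * I) * (((2 - u) ^ (k - 1) * φ₂ (2 - u) : ℝ) : ℂ)) volume 0 2 := by
    have := (((intervalIntegral.intervalIntegrable_rpow' (a := 0) (b := 2)
      (by linarith : -1 < k - 1)).mul_continuousOn hφ₂.continuousOn).comp_sub_left 2).symm
    norm_num at this
    exact this.ofReal.continuousOn_mul (by fun_prop)
  have hrefl := integral_cexp_mul_I_comp_sub_left (fun v => v ^ (k - 1) * φ₂ v) s 2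
  rw [ofReal_ofNat] at hrefl
  rw [integral_Icc_eq_integral_Ioc, ← intervalIntegral.integral_of_le (by norm_num), ← hrefl,
    ← intervalIntegral.integral_add
      (intervalIntegrable_cexp_mul_I_rpow_mul (by linarith) hφ₁ 0 2) hint₂,
    ← intervalIntegral.integral_const_mul]
  have hshift : ∫ t in (-1 : ℝ)..1,
      cexp (t * (I * s)) * (((1 - t) ^ (k - 1) * (1 + t) ^ k : ℝ) : ℂ) =
        ∫ u in (0 : ℝ)..2, cexp (((u - 1 : ℝ) : ℂ) * (I * s)) *
          (((1 - (u - 1)) ^ (k - 1) * (1 + (u - 1)) ^ k : ℝ) : ℂ) := by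
    rw [intervalIntegral.integral_comp_sub_right (fun t : ℝ =>
      cexp (t * (I * s)) * (((1 - t) ^ (k - 1) * (1 + t) ^ k : ℝ) : ℂ))]
    norm_num
  rw [hshift]
  refine intervalIntegral.integral_congr fun u _ => ?_
  have hphase : cexp (((u - 1 : ℝ) : ℂ) * (I * s)) = cexp (-(s * I)) * cexp (s * u * I) := by
    rw [← exp_add]
    push_cast
    ring_nf
  rw [hphase, show 1 - (u - 1) = 2 - u by ring, show 1 + (u - 1) = u by ring,
    mul_comm ((2 - u) ^ (k - 1)), hw u]
  push_cast
  ring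

theorem isBigO_integral_Icc_cexp_mul_weight (hk : 0 < k) :
    (fun s : ℝ => ∫ t in Icc (-1 : ℝ) 1,
      cexp (t * (I * s)) * (((1 - t) ^ (k - 1) * (1 + t) ^ k : ℝ) : ℂ)) =O[atTop] (· ^ (-k)) := by
  set θ : ℝ → ℝ := fun u => Real.smoothTransition (u - 1 / 2)
  have hθ : ContDiff ℝ ∞ θ := Real.smoothTransition.contDiff.comp (by fun_prop)
  have hθ₁ : ∀ u, 3 / 2 ≤ u → 1 - θ u = 0 := fun u hu =>
    sub_eq_zero.mpr (Real.smoothTransition.one_of_one_le (by linarith)).symm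
  have hθ₂ : ∀ v, 3 / 2 ≤ v → θ (2 - v) = 0 := fun v hv =>
    Real.smoothTransition.zero_of_nonpos (by linarith)
  have hφ₁ : ContDiff ℝ ∞ fun u => (1 - θ u) * (2 - u) ^ (k - 1) :=
    (contDiff_const.sub hθ).mul_rpow_sub (by norm_num) hθ₁
  have hφ₂ : ContDiff ℝ ∞ fun v => θ (2 - v) * (2 - v) ^ k :=
    (hθ.comp (contDiff_const.sub contDiff_id)).mul_rpow_sub (by norm_num) hθ₂
  have h₁ := isBigO_integral_cexp_mul_I_rpow_mul (a := k) (by linarith) two_pos hφ₁ <| by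
    filter_upwards [Ioi_mem_nhds (by norm_num : (3 / 2 : ℝ) < 2)] with u hu
    simp [hθ₁ u hu.le]
  have h₂ := isBigO_integral_cexp_mul_I_rpow_mul (a := k - 1) (by linarith) two_pos hφ₂ <| by
    filter_upwards [Ioi_mem_nhds (by norm_num : (3 / 2 : ℝ) < 2)] with u hu
    simp [hθ₂ u hu.le]
  rw [sub_add_cancel] at h₂
  have hk₁ : (fun s : ℝ => s ^ (-(k + 1))) =O[atTop] (· ^ (-k)) := by
    refine .of_bound 1 ?_
    filter_upwards [eventually_ge_atTop 1] with s hs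
    rw [one_mul, Real.norm_of_nonneg (by positivity), Real.norm_of_nonneg (by positivity)]
    exact Real.rpow_le_rpow_of_exponent_le hs (by linarith)
  refine .trans (isBigO_of_le _ fun s => ?_) ((h₁.norm_left.trans hk₁).add h₂.norm_left)
  rw [integral_Icc_cexp_mul_weight_eq hk hφ₁.continuous hφ₂.continuous fun u => by
    simp only [sub_sub_cancel]; ring]
  rw [Real.norm_of_nonneg (by positivity), norm_mul, ← neg_mul, ← ofReal_neg,
    norm_exp_ofReal_mul_I, one_mul]
  refine (norm_add_le _ _).trans_eq ?_
  rw [norm_mul, Complex.norm_conj, ← ofReal_ofNat, norm_cexp_ofReal_mul_ofReal_mul_I, one_mul]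

end Dunkl

/-- Uniform bound: `s^{2k} |D_k(is)|²` is bounded on `(0,∞)`. -/
theorem dunkl_stmt14 (k : ℝ) (hk : 0 < k) :
    ∃ M : ℝ, 0 < M ∧ ∀ s : ℝ, 0 < s →
      s ^ (2 * k) * ‖Dk k (Complex.I * (s : ℂ))‖ ^ 2 ≤ M := by
  have hbounded : ∀ s : ℝ, ‖∫ t in Icc (-1 : ℝ) 1,
      cexp (t * (I * s)) * (((1 - t) ^ (k - 1) * (1 + t) ^ k : ℝ) : ℂ)‖ ≤
        ∫ t in Icc (-1 : ℝ) 1, ‖(((1 - t) ^ (k - 1) * (1 + t) ^ k : ℝ) : ℂ)‖ := fun s => by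
    refine (norm_integral_le_integral_norm _).trans_eq (integral_congr_ae (ae_of_all _ fun t => ?_))
    dsimp only
    rw [norm_mul, show (t : ℂ) * (I * s) = ((t * s : ℝ) : ℂ) * I by push_cast; ring,
      norm_exp_ofReal_mul_I, one_mul]
  obtain ⟨B, hB⟩ := exists_forall_rpow_mul_norm_le_of_isBigO hk.le
    (isBigO_integral_Icc_cexp_mul_weight hk) hbounded
  set c := Real.Gamma (k + 1 / 2) / (Real.Gamma (1 / 2) * Real.Gamma k)
  refine ⟨(|c| * B) ^ 2 + 1, by positivity, fun s hs => ?_⟩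
  rw [Dk, norm_mul, norm_real, Real.norm_eq_abs, mul_comm 2 k, Real.rpow_mul hs.le,
    Real.rpow_two, ← mul_pow, mul_left_comm]
  calc _ ≤ (|c| * B) ^ 2 := by gcongr; exact hB s hs
    _ ≤ _ := le_add_of_nonneg_right zero_le_one
end

section
/- Let N ≥ 1, let R₊ ⊂ ℝᴺ be a finite nonempty set of nonzero vectors, let k : R₊ → [0,∞) with γ := Σ_{α∈R₊} k(α) > 0, and let w_k(ξ) = Π_{α∈R₊} |⟨α,ξ⟩|^{2k(α)}. Let C = {ξ ∈ ℝᴺ : ⟨α,ξ⟩ > 0 for all α ∈ R₊} and, for δ > 0, C_δ = {ξ ∈ C : ⟨α,ξ⟩ > δ|ξ| for all α ∈ R₊}. Suppose f : ℝᴺ → ℂ is measurable with |f(ξ)| ≤ 1 for all ξ, and for every δ > 0 there is a constant M_δ > 0 such that |f(ξ)|² ≤ M_δ / w_k(ξ) for all ξ ∈ C_δ with |ξ| ≥ 1. Then lim_{n→∞} n^{−N} ∫_{{ξ ∈ C : 1 ≤ |ξ| ≤ n}} |f(ξ)|² dξ = 0, where the integral is with respect to Lebesgue measure on ℝᴺ.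 -/
open MeasureTheory Filter Set

/-!
Split the shell `{ξ ∈ C : 1 ≤ |ξ| ≤ n}` into three pieces. The ball of radius `√n` has volume
`O(n^{N/2}) = o(n^N)`. Outside that ball and inside `C_δ` the weight is at least `(δ √n)^{2γ}`, so
`|f|² ≤ M_δ (δ √n)^{-2γ} → 0` there. The rest lies in the cone `{ξ : |⟨α, ξ⟩| ≤ δ |ξ| for some α}`,
whose part in the ball of radius `n` has volume `n^N` times its part in the unit ball; as `δ → 0`
the latter decreases to the volume of finitely many hyperplanes, which is zero.
-/

open Metric Module Topology Pointwise
open scoped RealInnerProductSpace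

lemma tendsto_nhds_zero_of_le_add {ι κ : Type*} {l : Filter ι} {L : Filter κ} [L.NeBot]
    {a : ι → ℝ} {s : κ → ℝ} (ha : ∀ i, 0 ≤ a i) (hs : Tendsto s L (𝓝 0))
    (h : ∀ᶠ δ in L, ∃ b : ι → ℝ, Tendsto b l (𝓝 0) ∧ ∀ᶠ i in l, a i ≤ b i + s δ) :
    Tendsto a l (𝓝 0) := by
  refine tendsto_order.2 ⟨fun ε hε => .of_forall fun i => hε.trans_le (ha i), fun ε hε => ?_⟩
  obtain ⟨δ, hsδ, b, hb, hab⟩ := ((hs.eventually (gt_mem_nhds (half_pos hε))).and h).exists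
  filter_upwards [hab, hb.eventually (gt_mem_nhds (half_pos hε))] with i hi hbi
  linarith

lemma rpow_sum_le_prod_rpow {ι : Type*} {s : Finset ι} {t : ℝ} {x k : ι → ℝ} (ht : 0 < t)
    (hx : ∀ i ∈ s, t ≤ x i) (hk : ∀ i ∈ s, 0 ≤ k i) :
    t ^ (∑ i ∈ s, k i) ≤ ∏ i ∈ s, x i ^ k i := by
  rw [Real.rpow_sum_of_pos ht]
  exact Finset.prod_le_prod (fun i _ => by positivity)
    fun i hi => Real.rpow_le_rpow ht.le (hx i hi) (hk i hi)

lemma setIntegral_le_measureReal_add {X : Type*} [MeasurableSpace X] {μ : Measure X}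
    {g : X → ℝ} {D B W : Set X} {C : ℝ} (hDm : MeasurableSet D) (hD : μ D ≠ ⊤)
    (hB : MeasurableSet B) (hW : MeasurableSet W) (hC : 0 ≤ C)
    (hg0 : ∀ x ∈ D, 0 ≤ g x) (hg1 : ∀ x ∈ D, g x ≤ 1)
    (hgC : ∀ x ∈ D, x ∉ B → x ∉ W → g x ≤ C) :
    ∫ x in D, g x ∂μ ≤ μ.real (D ∩ B) + μ.real (D ∩ W) + C * μ.real D := by
  have h1 : IntegrableOn (fun _ => (1 : ℝ)) D μ := integrableOn_const hD
  have hB1 : IntegrableOn (B.indicator (1 : X → ℝ)) D μ := h1.indicator hB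
  have hW1 : IntegrableOn (W.indicator (1 : X → ℝ)) D μ := h1.indicator hW
  have hle : ∀ x ∈ D, g x ≤ B.indicator (1 : X → ℝ) x + W.indicator (1 : X → ℝ) x + C := by
    intro x hx
    classical
    simp only [indicator_apply, Pi.one_apply]
    split_ifs with hxB hxW hxW
    · linarith [hg1 x hx]
    · linarith [hg1 x hx]
    · linarith [hg1 x hx]
    · linarith [hgC x hx hxB hxW]
  have hBW : IntegrableOn (fun x => B.indicator (1 : X → ℝ) x + W.indicator (1 : X → ℝ) x) D μ :=
    hB1.add hW1
  calc ∫ x in D, g x ∂μ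
      ≤ ∫ x in D, (B.indicator (1 : X → ℝ) x + W.indicator (1 : X → ℝ) x + C) ∂μ :=
        integral_mono_of_nonneg (ae_restrict_of_forall_mem hDm hg0)
          (hBW.add (integrableOn_const hD)) (ae_restrict_of_forall_mem hDm hle)
    _ = μ.real (D ∩ B) + μ.real (D ∩ W) + C * μ.real D := by
        rw [integral_add hBW (integrableOn_const hD), integral_add hB1 hW1,
          integral_indicator_one hB, integral_indicator_one hW, setIntegral_const,
          measureReal_restrict_apply hB, measureReal_restrict_apply hW, smul_eq_mul, mul_comm,
          inter_comm B, inter_comm W]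

section InnerProductSpace

variable {E : Type*} [NormedAddCommGroup E] [InnerProductSpace ℝ E]

def nearWalls (R : Finset E) (δ : ℝ) : Set E := {x | ∃ α ∈ R, |⟪α, x⟫| ≤ δ * ‖x‖}

def chamberShell (R : Finset E) (n : ℝ) : Set E :=
  {ξ | (∀ α ∈ R, 0 < ⟪α, ξ⟫) ∧ 1 ≤ ‖ξ‖ ∧ ‖ξ‖ ≤ n}

lemma isClosed_nearWalls (R : Finset E) (δ : ℝ) : IsClosed (nearWalls R δ) := by
  have : nearWalls R δ = ⋃ α ∈ R, {x | |⟪α, x⟫| ≤ δ * ‖x‖} := by ext; simp [nearWalls]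
  exact this ▸ R.finite_toSet.isClosed_biUnion fun α _ => isClosed_le (by fun_prop) (by fun_prop)

lemma nearWalls_mono (R : Finset E) : Monotone (nearWalls R) :=
  fun _ _ hδ _ ⟨α, hα, hx⟩ => ⟨α, hα, hx.trans (by gcongr)⟩

lemma smul_nearWalls (R : Finset E) (δ : ℝ) {c : ℝ} (hc : 0 < c) :
    c • nearWalls R δ = nearWalls R δ := by
  ext x
  simp only [mem_smul_set_iff_inv_smul_mem₀ hc.ne', nearWalls, mem_ofPred_eq, inner_smul_right,
    norm_smul, abs_mul, Real.norm_eq_abs, abs_inv, abs_of_pos hc, mul_left_comm δ]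
  simp [mul_le_mul_iff_right₀ (inv_pos.2 hc)]

lemma measurableSet_chamberShell [MeasurableSpace E] [OpensMeasurableSpace E] (R : Finset E)
    (n : ℝ) : MeasurableSet (chamberShell R n) := by
  have : chamberShell R n = (⋂ α ∈ R, {ξ | 0 < ⟪α, ξ⟫}) ∩ (closedBall 0 n \ ball 0 1) := by
    ext; simp [chamberShell, and_comm]
  rw [this]
  exact (R.finite_toSet.isOpen_biInter fun α _ => isOpen_lt continuous_const
    (by fun_prop)).measurableSet.inter (measurableSet_closedBall.diff measurableSet_ball)

lemma biInter_nearWalls_subset (R : Finset E) :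
    ⋂ δ > 0, nearWalls R δ ⊆ ⋃ α ∈ R, {x | ⟪α, x⟫ = 0} := by
  intro x hx
  by_contra h
  simp only [mem_iUnion, mem_ofPred_eq, not_exists] at h
  have hsmall : ∀ α ∈ R, ∀ᶠ δ in 𝓝[>] (0 : ℝ), δ * ‖x‖ < |⟪α, x⟫| := fun α hα =>
    (((continuous_id.mul continuous_const).tendsto' 0 0 (zero_mul _)).mono_left
      nhdsWithin_le_nhds).eventually (gt_mem_nhds (abs_pos.2 (h α hα)))
  obtain ⟨δ, hδ, hδ0⟩ := ((eventually_all_finset R).2 hsmall |>.and self_mem_nhdsWithin).exists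
  obtain ⟨α, hα, hle⟩ := mem_iInter₂.1 hx δ hδ0
  exact (hδ α hα).not_ge hle

variable [FiniteDimensional ℝ E] [MeasurableSpace E] [BorelSpace E] (μ : Measure E)
  [μ.IsAddHaarMeasure]

lemma measure_setOf_inner_eq_zero {α : E} (hα : α ≠ 0) : μ {x | ⟪α, x⟫ = 0} = 0 := by
  have : {x | ⟪α, x⟫ = 0} = ((ℝ ∙ α)ᗮ : Submodule ℝ E) := by
    ext; simp [Submodule.mem_orthogonal_singleton_iff_inner_right]
  rw [this]
  exact Measure.addHaar_submodule μ _ (by simpa [Submodule.orthogonal_eq_top_iff] using hα)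

lemma measureReal_nearWalls_inter_closedBall (R : Finset E) (δ : ℝ) {r : ℝ} (hr : 0 < r) :
    μ.real (nearWalls R δ ∩ closedBall 0 r) =
      r ^ finrank ℝ E * μ.real (nearWalls R δ ∩ closedBall 0 1) := by
  have : nearWalls R δ ∩ closedBall 0 r = r • (nearWalls R δ ∩ closedBall 0 1) := by
    rw [smul_set_inter₀ hr.ne', smul_nearWalls R δ hr, _root_.smul_closedBall _ _ zero_le_one,
      smul_zero, Real.norm_eq_abs, abs_of_pos hr, mul_one]
  rw [this, measureReal_def, Measure.addHaar_smul_of_nonneg μ hr.le, ENNReal.toReal_mul,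
    ENNReal.toReal_ofReal (by positivity), measureReal_def]

lemma tendsto_measureReal_nearWalls_inter_closedBall {R : Finset E} (hR : ∀ α ∈ R, α ≠ 0) :
    Tendsto (fun δ => μ.real (nearWalls R δ ∩ closedBall 0 1)) (𝓝[>] 0) (𝓝 0) := by
  have h := tendsto_measure_biInter_gt (μ := μ) (s := fun δ => nearWalls R δ ∩ closedBall 0 1)
    (fun δ _ =>
      ((isClosed_nearWalls R δ).inter isClosed_closedBall).measurableSet.nullMeasurableSet)
    (fun _ _ _ hδ => inter_subset_inter_left _ (nearWalls_mono R hδ))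
    ⟨1, one_pos, (measure_mono inter_subset_right |>.trans_lt measure_closedBall_lt_top).ne⟩
  have hnull : μ (⋂ δ > 0, nearWalls R δ ∩ closedBall 0 1) = 0 := by
    refine measure_mono_null ((biInter_mono subset_rfl fun δ _ => inter_subset_left).trans
      (biInter_nearWalls_subset R)) ?_
    exact (measure_biUnion_null_iff R.countable_toSet).2 fun α hα =>
      measure_setOf_inner_eq_zero μ (hR α hα)
  rw [hnull] at h
  simpa [Function.comp_def, measureReal_def] using
    (ENNReal.tendsto_toReal ENNReal.zero_ne_top).comp h

lemma setIntegral_chamberShell_le {R : Finset E} {k : E → ℝ} (hk : ∀ α ∈ R, 0 ≤ k α)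
    {f : E → ℂ} (hf1 : ∀ ξ, ‖f ξ‖ ≤ 1) {δ M : ℝ} (hδ : 0 < δ) (hM : 0 ≤ M)
    (hMf : ∀ ξ, (∀ α ∈ R, 0 < ⟪α, ξ⟫) → (∀ α ∈ R, δ * ‖ξ‖ < ⟪α, ξ⟫) → 1 ≤ ‖ξ‖ →
      ‖f ξ‖ ^ 2 ≤ M / ∏ α ∈ R, |⟪α, ξ⟫| ^ (2 * k α))
    {r n : ℝ} (hr : 0 < r) (hn : 0 < n) :
    ∫ ξ in chamberShell R n, ‖f ξ‖ ^ 2 ∂μ ≤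
      r ^ finrank ℝ E * μ.real (closedBall 0 1) +
      n ^ finrank ℝ E * μ.real (nearWalls R δ ∩ closedBall 0 1) +
      M / (δ * r) ^ (∑ α ∈ R, 2 * k α) * (n ^ finrank ℝ E * μ.real (closedBall 0 1)) := by
  have hD : chamberShell R n ⊆ closedBall 0 n := fun ξ hξ => mem_closedBall_zero_iff.2 hξ.2.2
  refine (setIntegral_le_measureReal_add (B := closedBall 0 r)
    (C := M / (δ * r) ^ (∑ α ∈ R, 2 * k α)) (measurableSet_chamberShell R n)
    (measure_mono hD |>.trans_lt measure_closedBall_lt_top).ne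
    measurableSet_closedBall (isClosed_nearWalls R δ).measurableSet (by positivity)
    (fun _ _ => by positivity) (fun ξ _ => pow_le_one₀ (norm_nonneg _) (hf1 ξ)) ?_).trans ?_
  · rintro ξ ⟨hpos, h1, -⟩ hrξ hW
    simp only [mem_closedBall_zero_iff, not_le] at hrξ
    simp only [nearWalls, mem_ofPred_eq, not_exists, not_and, not_le] at hW
    have hcone : ∀ α ∈ R, δ * ‖ξ‖ < ⟪α, ξ⟫ := fun α hα => abs_of_pos (hpos α hα) ▸ hW α hα
    refine (hMf ξ hpos hcone h1).trans (div_le_div_of_nonneg_left hM (by positivity) ?_)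
    refine rpow_sum_le_prod_rpow (by positivity) (fun α hα => ?_) fun α hα => by linarith [hk α hα]
    calc δ * r ≤ δ * ‖ξ‖ := by gcongr
      _ ≤ |⟪α, ξ⟫| := (hW α hα).le
  · have hfin {s : Set E} (hs : s ⊆ closedBall 0 n) : μ s ≠ ⊤ :=
      (measure_mono hs |>.trans_lt measure_closedBall_lt_top).ne
    gcongr
    · exact (measureReal_mono inter_subset_right measure_closedBall_lt_top.ne).trans_eq
        (Measure.addHaar_real_closedBall' μ 0 hr.le)
    · exact (measureReal_mono (s₂ := nearWalls R δ ∩ closedBall 0 n)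
        (fun ξ hξ => ⟨hξ.2, hD hξ.1⟩) (hfin inter_subset_right)).trans_eq
        (measureReal_nearWalls_inter_closedBall μ R δ hn)
    · exact (measureReal_mono hD (hfin subset_rfl)).trans_eq
        (Measure.addHaar_real_closedBall' μ 0 hn.le)

end InnerProductSpace

theorem dunkl_stmt16_general (N : ℕ) (hN : 1 ≤ N)
    (R : Finset (EuclideanSpace ℝ (Fin N)))
    (hR0 : ∀ α ∈ R, α ≠ 0)
    (k : EuclideanSpace ℝ (Fin N) → ℝ) (hk : ∀ α ∈ R, 0 ≤ k α)
    (hγ : 0 < ∑ α ∈ R, k α)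
    (f : EuclideanSpace ℝ (Fin N) → ℂ)
    (hf1 : ∀ ξ, ‖f ξ‖ ≤ 1)
    (hbound : ∀ δ : ℝ, 0 < δ → ∃ M : ℝ, 0 < M ∧
      ∀ ξ : EuclideanSpace ℝ (Fin N),
        (∀ α ∈ R, 0 < (inner ℝ α ξ : ℝ)) → (∀ α ∈ R, δ * ‖ξ‖ < (inner ℝ α ξ : ℝ)) →
          1 ≤ ‖ξ‖ →
          ‖f ξ‖ ^ 2 ≤ M / ∏ α ∈ R, |(inner ℝ α ξ : ℝ)| ^ (2 * k α)) :
    Tendsto (fun n : ℕ => (1 / (n : ℝ) ^ N) *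
        ∫ ξ in {ξ : EuclideanSpace ℝ (Fin N) |
          (∀ α ∈ R, 0 < (inner ℝ α ξ : ℝ)) ∧ 1 ≤ ‖ξ‖ ∧ ‖ξ‖ ≤ (n : ℝ)},
          ‖f ξ‖ ^ 2)
      atTop (nhds 0) := by
  set ω := volume.real (closedBall (0 : EuclideanSpace ℝ (Fin N)) 1) with hω
  refine tendsto_nhds_zero_of_le_add (fun n => by positivity)
    (tendsto_measureReal_nearWalls_inter_closedBall volume hR0) ?_
  filter_upwards [self_mem_nhdsWithin] with δ (hδ : 0 < δ)
  obtain ⟨M, hM, hMf⟩ := hbound δ hδ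
  have hγ2 : 0 < ∑ α ∈ R, 2 * k α := by rw [← Finset.mul_sum]; positivity
  have hsqrt : Tendsto (fun n : ℕ => √(n : ℝ)) atTop atTop :=
    Real.tendsto_sqrt_atTop.comp tendsto_natCast_atTop_atTop
  refine ⟨fun n => ω * (√n)⁻¹ ^ N + M / (δ * √n) ^ (∑ α ∈ R, 2 * k α) * ω, ?_, ?_⟩
  · have h1 := tendsto_inv_atTop_zero.comp hsqrt
    have h2 := tendsto_const_nhds (x := M).div_atTop
      ((tendsto_rpow_atTop hγ2).comp (hsqrt.const_mul_atTop hδ))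
    simpa [zero_pow (by omega : N ≠ 0)] using ((h1.pow N).const_mul ω).add (h2.mul_const ω)
  · filter_upwards [eventually_gt_atTop 0] with n hn
    have hn' : (0 : ℝ) < n := by exact_mod_cast hn
    have hbd := setIntegral_chamberShell_le volume hk hf1 hδ hM.le hMf (Real.sqrt_pos.2 hn') hn'
    rw [finrank_euclideanSpace_fin, ← hω] at hbd
    have hnN : (n : ℝ) ^ N = √n ^ N * √n ^ N := by rw [← mul_pow, Real.mul_self_sqrt hn'.le]
    calc _ ≤ 1 / (n : ℝ) ^ N * _ := mul_le_mul_of_nonneg_left hbd (by positivity)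
      _ = _ := by
        have hr : √(n : ℝ) ≠ 0 := (Real.sqrt_pos.2 hn').ne'
        rw [hnN, inv_pow]
        field_simp
        ring

/-- Wiener-type Cesàro decay over a Weyl chamber: if `f` is bounded by `1` and satisfies
`|f(ξ)|² ≤ M_δ / w_k(ξ)` on each truncated cone `C_δ` (for `|ξ| ≥ 1`), where the weight
`w_k` has positive total index `γ = Σ k(α) > 0`, then
`n^{-N} ∫_{ξ ∈ C, 1 ≤ |ξ| ≤ n} |f(ξ)|² dξ → 0`. -/
theorem dunkl_stmt16 (N : ℕ) (hN : 1 ≤ N)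
    (R : Finset (EuclideanSpace ℝ (Fin N))) (hR : R.Nonempty)
    (hR0 : ∀ α ∈ R, α ≠ 0)
    (k : EuclideanSpace ℝ (Fin N) → ℝ) (hk : ∀ α ∈ R, 0 ≤ k α)
    (hγ : 0 < ∑ α ∈ R, k α)
    (f : EuclideanSpace ℝ (Fin N) → ℂ) (hfm : Measurable f)
    (hf1 : ∀ ξ, ‖f ξ‖ ≤ 1)
    (hbound : ∀ δ : ℝ, 0 < δ → ∃ M : ℝ, 0 < M ∧
      ∀ ξ : EuclideanSpace ℝ (Fin N),
        (∀ α ∈ R, 0 < (inner ℝ α ξ : ℝ)) → (∀ α ∈ R, δ * ‖ξ‖ < (inner ℝ α ξ : ℝ)) →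
          1 ≤ ‖ξ‖ →
          ‖f ξ‖ ^ 2 ≤ M / ∏ α ∈ R, |(inner ℝ α ξ : ℝ)| ^ (2 * k α)) :
    Tendsto (fun n : ℕ => (1 / (n : ℝ) ^ N) *
        ∫ ξ in {ξ : EuclideanSpace ℝ (Fin N) |
          (∀ α ∈ R, 0 < (inner ℝ α ξ : ℝ)) ∧ 1 ≤ ‖ξ‖ ∧ ‖ξ‖ ≤ (n : ℝ)},
          ‖f ξ‖ ^ 2)
      atTop (nhds 0) :=
  dunkl_stmt16_general N hN R hR0 k hk hγ f hf1 hbound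
end
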